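/- arXiv:2604.26989 — 11 statements merged into one kernel-verified Lean document; each statement's English description precedes it below -/
import Mathlib

section
/- If $x, y, z$ are elements of the finite field $\mathbb{F}_{81}$ satisfying $x^{20} = y^{20} = z^{20} = 1$ and $x + y + z = 0$, then $x = y = z$. -/
lemma key {F : Type*} [Field F] (h3 : (3:F) = 0) (u : F)
    (hu : u ^ 20 = 1) (hv : (u + 1) ^ 20 = 1) : u = 1 := by
  linear_combination (1 - u + u^2 + u^8 - u^9 - u^10 + u^12 + u^13 - u^14) * hu
    + (-u - u^2 - u^3 - u^4 - u^5 - u^6 + u^7 - u^8 + u^9 + u^10 + u^11 + u^12 + u^14) * hv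
    + ((7)*u^2 + (70)*u^3 + (450)*u^4 + (2065)*u^5 + (7233)*u^6 + (20153)*u^7 + (45980)*u^8 + (87856)*u^9 + (143196)*u^10 + (202185)*u^11 + (250306)*u^12 + (273562)*u^13 + (263232)*u^14 + (218069)*u^15 + (143887)*u^16 + (51623)*u^17 + (-44840)*u^18 + (-130587)*u^19 + (-192166)*u^20 + (-221235)*u^21 + (-217575)*u^22 + (-188720)*u^23 + (-146198)*u^24 + (-101206)*u^25 + (-62016)*u^26 + (-33060)*u^27 + (-14985)*u^28 + (-5618)*u^29 + (-1685)*u^30 + (-387)*u^31 + (-64)*u^32 + (-7)*u^33) * h3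

lemma pair {F : Type*} [Field F] (h3 : (3:F) = 0) (a b : F)
    (ha : a ^ 20 = 1) (hb : b ^ 20 = 1) (hab : (a + b) ^ 20 = 1) : a = b := by
  set u := b * a ^ 19 with hu_def
  have hu : u ^ 20 = 1 := by
    have : u ^ 20 = b ^ 20 * (a ^ 20) ^ 19 := by rw [hu_def]; ring
    rw [this, ha, hb]; ring
  have hv : (u + 1) ^ 20 = 1 := by
    have h1 : u + 1 = a ^ 19 * (a + b) := by rw [hu_def]; linear_combination -ha
    rw [h1]
    have : (a ^ 19 * (a + b)) ^ 20 = (a ^ 20) ^ 19 * (a + b) ^ 20 := by ring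
    rw [this, ha, hab]; ring
  have h := key h3 u hu hv
  rw [hu_def] at h
  linear_combination b * ha - a * h

theorem stmt0 (F : Type*) [Field F] [Fintype F] (hF : Fintype.card F = 81)
    (x y z : F) (hx : x ^ 20 = 1) (hy : y ^ 20 = 1) (hz : z ^ 20 = 1)
    (hsum : x + y + z = 0) : x = y ∧ y = z := by
  have h81 : (81 : F) = 0 := by
    have := FiniteField.cast_card_eq_zero F
    rw [hF] at this
    exact_mod_cast this
  have h3 : (3 : F) = 0 := by
    by_contra h
    have : ((3:F))^4 ≠ 0 := pow_ne_zero _ h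
    apply this
    linear_combination h81
  constructor
  · apply pair h3 x y hx hy
    have : x + y = -z := by linear_combination hsum
    rw [this]
    have : (-z) ^ 20 = z ^ 20 := by ring
    rw [this, hz]
  · apply pair h3 y z hy hz
    have : y + z = -x := by linear_combination hsum
    rw [this]
    have : (-x) ^ 20 = x ^ 20 := by ring
    rw [this, hx]
end

section
/- The set $G = \{x \in \mathbb{F}_{81} : x^{20} = 1\}$ is a cap set in $\mathbb{F}_{81}$, i.e., there are no pairwise distinct $a, b, c \in G$ with $a + b + c = 0$. -/
/-!
Dividing by `a`, it suffices to show that in characteristic 3 the only `u` with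
`u ^ 20 = 1` and `(u + 1) ^ 20 = 1` is `u = 1` (then `a = b`). Write `n = u ^ 10` and
`t = u + u ^ 9` (norm and trace from `𝔽₈₁` down to `𝔽₉`). Both `n` and `m = (u + 1) ^ 10`
square to 1, and by Frobenius `m = n + t + 1`, so `n` and `t` are fixed by cubing. Cubing the
identity `u ^ 2 - t u + n = 0` then shows that `u ^ 3` satisfies the same equation, which
expands to `(u ^ 3 - u) ^ 4 = 0`; so `u ∈ {0, 1, -1}`, and only `u = 1` survives.
-/

section CharThree

variable {F : Type*} [Field F] [CharP F 3]

lemma pow_three_eq_self_of_trace_norm {u : F} (ht : (u + u ^ 9) ^ 3 = u + u ^ 9)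
    (hn : (u ^ 10) ^ 3 = u ^ 10) : u ^ 3 = u := by
  have h3 : (3 : F) = 0 := by exact_mod_cast CharP.cast_eq_zero F 3
  have frob : (u ^ 2 - (u + u ^ 9) * u + u ^ 10) ^ 3
      = (u ^ 2) ^ 3 - (u + u ^ 9) ^ 3 * u ^ 3 + (u ^ 10) ^ 3 := by
    rw [add_pow_char, sub_pow_char, mul_pow]
  have : (u ^ 3 - u) ^ 4 = 0 := by
    linear_combination frob - u ^ 3 * ht + hn + (2 * u ^ 8 - u ^ 10 - u ^ 6) * h3
  exact sub_eq_zero.mp (pow_eq_zero_iff (by norm_num) |>.mp this)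

lemma eq_one_of_pow_twenty_eq_one {u : F} (hu : u ^ 20 = 1) (hu1 : (u + 1) ^ 20 = 1) :
    u = 1 := by
  have cube_eq_self {x : F} (hx : x ^ 2 = 1) : x ^ 3 = x := by rw [pow_succ', hx, mul_one]
  have hn : (u ^ 10) ^ 2 = 1 := by rw [← pow_mul, hu]
  have hm : ((u + 1) ^ 10) ^ 2 = 1 := by rw [← pow_mul, hu1]
  have hfrob : (u + 1) ^ 10 = u ^ 10 + (u + u ^ 9) + 1 := by
    have : (u + 1) ^ 3 ^ 2 = u ^ 3 ^ 2 + 1 ^ 3 ^ 2 := add_pow_char_pow u 1 3 2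
    linear_combination (u + 1) * this
  have ht : (u + u ^ 9) ^ 3 = u + u ^ 9 := by
    have : u + u ^ 9 = (u + 1) ^ 10 - u ^ 10 - 1 := by rw [hfrob]; ring
    rw [this, sub_pow_char, sub_pow_char, one_pow, cube_eq_self hm, cube_eq_self hn]
  have hu3 := pow_three_eq_self_of_trace_norm ht (cube_eq_self hn)
  have hu0 : u ≠ 0 := by rintro rfl; norm_num at hu
  have hu_neg : u + 1 ≠ 0 := by intro h; rw [h] at hu1; norm_num at hu1
  have : u * (u + 1) * (u - 1) = 0 := by linear_combination hu3
  simpa [hu0, hu_neg, sub_eq_zero] using this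

lemma eq_of_pow_twenty_eq_one_of_add_add_eq_zero {a b c : F} (ha : a ^ 20 = 1)
    (hb : b ^ 20 = 1) (hc : c ^ 20 = 1) (habc : a + b + c = 0) : a = b := by
  have ha0 : a ≠ 0 := by rintro rfl; norm_num at ha
  have hba : b / a + 1 = -(c / a) := by field_simp; linear_combination habc
  have : b / a = 1 := eq_one_of_pow_twenty_eq_one (by rw [div_pow, ha, hb, div_one])
    (by rw [hba, neg_pow, div_pow, hc, ha]; norm_num)
  exact ((div_eq_one_iff_eq ha0).mp this).symm

end CharThree

theorem stmt1 (F : Type*) [Field F] [Fintype F] (hF : Fintype.card F = 81) :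
    ¬ ∃ a b c : F, a ∈ {x : F | x ^ 20 = 1} ∧ b ∈ {x : F | x ^ 20 = 1} ∧
      c ∈ {x : F | x ^ 20 = 1} ∧ a ≠ b ∧ a ≠ c ∧ b ≠ c ∧ a + b + c = 0 := by
  have : CharP F 3 := charP_of_card_eq_prime_pow (f := 4) (hF.trans (by norm_num))
  rintro ⟨a, b, c, ha, hb, hc, hab, -, -, habc⟩
  exact hab (eq_of_pow_twenty_eq_one_of_add_add_eq_zero ha hb hc habc)
end

section
/- If $x, y, z$ are elements of the finite field $\mathbb{F}_{243}$ satisfying $x^{22} = y^{22} = z^{22} = 1$ and $x + y + z = 0$, then $x = y = z$. -/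
lemma key_s2 {F : Type*} [Field F] (h3 : (3:F) = 0) (a : F)
    (hA : a ^ 22 = 1) (hB : (1 + a) ^ 22 = 1) : a = 1 := by
  linear_combination (-((2:F) * 1 + (2:F) * a ^ 2 + (1:F) * a ^ 8 + (1:F) * a ^ 9 + (2:F) * a ^ 12 + (1:F) * a ^ 14 + (2:F) * a ^ 15 + (1:F) * a ^ 18 + (1:F) * a ^ 20)) * hA + (-((2:F) * 1 + (2:F) * a ^ 1 + (1:F) * a ^ 2 + (2:F) * a ^ 3 + (1:F) * a ^ 6 + (1:F) * a ^ 7 + (2:F) * a ^ 8 + (2:F) * a ^ 9 + (1:F) * a ^ 12 + (1:F) * a ^ 13 + (2:F) * a ^ 14 + (2:F) * a ^ 15 + (1:F) * a ^ 18 + (1:F) * a ^ 19 + (2:F) * a ^ 20)) * hB + (((-(1:F)) * 1 + (14:F) * a ^ 1 + (168:F) * a ^ 2 + (1188:F) * a ^ 3 + (5995:F) * a ^ 4 + (23100:F) * a ^ 5 + (70763:F) * a ^ 6 + (177100:F) * a ^ 7 + (369387:F) * a ^ 8 + (651988:F) * a ^ 9 + (986117:F) * a ^ 10 + (1292769:F)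 * a ^ 11 + (1488099:F) * a ^ 12 + (1533111:F) * a ^ 13 + (1461450:F) * a ^ 14 + (1360219:F) * a ^ 15 + (1312993:F) * a ^ 16 + (1345209:F) * a ^ 17 + (1413955:F) * a ^ 18 + (1451323:F) * a ^ 19 + (1425777:F) * a ^ 20 + (1368147:F) * a ^ 21 + (1338969:F) * a ^ 22 + (1368416:F) * a ^ 23 + (1426599:F) * a ^ 24 + (1452266:F) * a ^ 25 + (1409985:F) * a ^ 26 + (1318229:F) * a ^ 27 + (1222236:F) * a ^ 28 + (1143000:F) * a ^ 29 + (1056460:F) * a ^ 30 + (921894:F) * a ^ 31 + (726517:F) * a ^ 32 + (501039:F) * a ^ 33 + (296088:F) * a ^ 34 + (147514:F) * a ^ 35 + (60974:F) * a ^ 36 + (20509:F) * a ^ 37 + (5467:F) * a ^ 38 + (1111:F) * a ^ 39 + (162:F) * a ^ 40 + (15:F) * a ^ 41 + (1:F) * a ^ 42) + a) * h3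

theorem stmt2 (F : Type*) [Field F] [Fintype F] (hF : Fintype.card F = 243)
    (x y z : F) (hx : x ^ 22 = 1) (hy : y ^ 22 = 1) (hz : z ^ 22 = 1)
    (hsum : x + y + z = 0) : x = y ∧ y = z := by
  have h243 : (243 : F) = 0 := by
    have := FiniteField.cast_card_eq_zero F
    rwa [hF] at this
  have h3 : (3 : F) = 0 := by
    have h5 : (3 : F) ^ 5 = 0 := by norm_num at h243 ⊢; linear_combination h243
    exact pow_eq_zero_iff (by norm_num) |>.mp h5
  have hz0 : z ≠ 0 := by rintro rfl; simp at hz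
  have hx0 : x ≠ 0 := by rintro rfl; simp at hx
  have hy0 : y ≠ 0 := by rintro rfl; simp at hy
  have ha : (x / z) ^ 22 = 1 := by
    rw [div_pow, hx, hz]; norm_num
  have hb : (y / z) ^ 22 = 1 := by
    rw [div_pow, hy, hz]; norm_num
  have hab : (1 + x / z) ^ 22 = (y / z) ^ 22 := by
    have : 1 + x / z = -(y / z) := by
      field_simp
      linear_combination hsum
    rw [this]; ring
  have hxz : x / z = 1 := key_s2 h3 _ ha (hab.trans hb)
  have hba : (1 + y / z) ^ 22 = (x / z) ^ 22 := by
    have : 1 + y / z = -(x / z) := by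
      field_simp
      linear_combination hsum
    rw [this]; ring
  have hyz : y / z = 1 := key_s2 h3 _ hb (hba.trans ha)
  have hx' : x = z := by field_simp at hxz; exact hxz
  have hy' : y = z := by field_simp at hyz; exact hyz
  exact ⟨hx'.trans hy'.symm, hy'⟩
end

section
/- If $x, y, z$ are elements of the finite field $\mathbb{F}_{729}$ satisfying $x^{28} = y^{28} = z^{28} = 1$ and $x + y + z = 0$, then $x = y = z$. -/
lemma key_aux {F : Type*} [Field F] (h3 : (3 : F) = 0) (a : F)
    (hA : a ^ 28 = 1) (hB : (a + 1) ^ 28 = 1) : a = 1 := by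
  linear_combination (1 + a^2 + 2*a^3 + a^5 + 2*a^6 + a^8 + 2*a^9 + a^11 + 2*a^12 + a^14 + 2*a^15 + a^17 + 2*a^18 + a^20 + 2*a^21 + a^23 + 2*a^24 + a^26) * hA + (1 + a + 2*a^2 + a^4 + 2*a^5 + a^7 + 2*a^8 + a^10 + 2*a^11 + a^13 + 2*a^14 + a^16 + 2*a^17 + a^19 + 2*a^20 + a^22 + 2*a^23 + a^25 + 2*a^26) * hB - (9*a + 135*a^2 + 1236*a^3 + 8169*a^4 + 41778*a^5 + 172134*a^6 + 587124*a^7 + 1690893*a^8 + 4174249*a^9 + 8941184*a^10 + 16791888*a^11 + 27919334*a^12 + 41504239*a^13 + 55767918*a^14 + 68593109*a^15 + 78389224*a^16 + 84655803*a^17 + 87925989*a^18 + 89241429*a^19 + 89584818*a^20 + 89586934*a^21 + 89531459*a^22 + 89496483*a^23 + 89482999*a^24 + 89479316*a^25 + 89478591*a^26 + 89478494*a^27 + 89478486*a^28 + 89478475*a^29 + 89478341*a^30 + 89477142*a^31 + 89469466*a^32 + 89431931*a^33 + 89286042*a^34 + 88823626*a^35 + 87606536*a^36 + 84911672*a^37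 + 79844656*a^38 + 71699736*a^39 + 60454967*a^40 + 47082766*a^41 + 33366096*a^42 + 21229847*a^43 + 11980741*a^44 + 5926866*a^45 + 2539357*a^46 + 929701*a^47 + 286231*a^48 + 72607*a^49 + 14761*a^50 + 2311*a^51 + 262*a^52 + 19*a^53 + a^54) * h3

theorem stmt3 (F : Type*) [Field F] [Fintype F] (hF : Fintype.card F = 729)
    (x y z : F) (hx : x ^ 28 = 1) (hy : y ^ 28 = 1) (hz : z ^ 28 = 1)
    (hsum : x + y + z = 0) : x = y ∧ y = z := by
  have h729 : (729 : F) = 0 := by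
    have := FiniteField.cast_card_eq_zero F
    rwa [hF] at this
  have h3 : (3 : F) = 0 := by
    have h : (3 : F) ^ 6 = 0 := by norm_num [h729] at h729 ⊢; linear_combination h729
    exact pow_eq_zero_iff (by norm_num) |>.mp h
  have hz0 : z ≠ 0 := by
    intro h; rw [h] at hz; simp at hz
  have hxz : x = z := by
    have hA : (x / z) ^ 28 = 1 := by
      rw [div_pow, hx, hz, one_div_one]
    have hB : (x / z + 1) ^ 28 = 1 := by
      have : x / z + 1 = -(y / z) := by
        field_simp
        linear_combination hsum
      rw [this, neg_pow, div_pow, hy, hz]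
      norm_num
    have := key_aux h3 (x / z) hA hB
    field_simp at this
    exact this
  have hyz : y = z := by
    have hA : (y / z) ^ 28 = 1 := by
      rw [div_pow, hy, hz, one_div_one]
    have hB : (y / z + 1) ^ 28 = 1 := by
      have : y / z + 1 = -(x / z) := by
        field_simp
        linear_combination hsum
      rw [this, neg_pow, div_pow, hx, hz]
      norm_num
    have := key_aux h3 (y / z) hA hB
    field_simp at this
    exact this
  exact ⟨hxz.trans hyz.symm, hyz⟩
end

section
/- Let $n \geq 1$ and let $F$ be the finite field of order $2^{2n}$. If $a, b, c, d \in F$ satisfy $a^{2^n+1} = b^{2^n+1} = c^{2^n+1} = d^{2^n+1} = 1$ and $a + b + c + d = 0$, then the multiset $\{a,b,c,d\}$ can be split into two equal pairs; i.e., $a = b$ and $c = d$, or $a = c$ and $b = d$, or $a = d$ and $b = c$. -/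
theorem stmt4 (n : ℕ) (hn : 1 ≤ n) (F : Type*) [Field F] [Fintype F]
    (hF : Fintype.card F = 2 ^ (2 * n))
    (a b c d : F) (ha : a ^ (2 ^ n + 1) = 1) (hb : b ^ (2 ^ n + 1) = 1)
    (hc : c ^ (2 ^ n + 1) = 1) (hd : d ^ (2 ^ n + 1) = 1)
    (hsum : a + b + c + d = 0) :
    (a = b ∧ c = d) ∨ (a = c ∧ b = d) ∨ (a = d ∧ b = c) := by
  -- characteristic 2
  obtain ⟨p, hcp⟩ := CharP.exists F
  haveI := hcp
  haveI hpprime : Fact p.Prime := ⟨CharP.char_is_prime F p⟩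
  obtain ⟨m, _, hm⟩ := FiniteField.card F p
  have hp2 : p = 2 := by
    have hdvd : p ∣ 2 ^ (2 * n) := by
      rw [← hF, hm]
      exact dvd_pow_self p m.2.ne'
    have := hpprime.1.dvd_of_dvd_pow hdvd
    exact (Nat.prime_dvd_prime_iff_eq hpprime.1 Nat.prime_two).mp this
  subst hp2
  haveI : Fact (Nat.Prime 2) := ⟨Nat.prime_two⟩
  have htwo : (2 : F) = 0 := by
    have := CharP.cast_eq_zero F 2
    exact_mod_cast this
  -- nonzero
  have hne : ∀ x : F, x ^ (2 ^ n + 1) = 1 → x ≠ 0 := by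
    rintro x hx rfl
    simp at hx
  have ha0 := hne a ha
  have hb0 := hne b hb
  have hc0 := hne c hc
  have hd0 := hne d hd
  -- Frobenius inverse
  have hinvf : ∀ x : F, x ^ (2 ^ n + 1) = 1 → x ^ (2 ^ n) = x⁻¹ := by
    intro x hx
    have : x ^ (2 ^ n) * x = 1 := by rw [← pow_succ]; exact hx
    exact eq_inv_of_mul_eq_one_left this
  -- apply Frobenius to hsum
  have hfro : a ^ 2 ^ n + b ^ 2 ^ n + c ^ 2 ^ n + d ^ 2 ^ n = 0 := by
    have h0 : (a + b + c + d) ^ 2 ^ n = 0 := by rw [hsum]; exact zero_pow (by positivity)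
    rwa [add_pow_char_pow, add_pow_char_pow, add_pow_char_pow] at h0
  rw [hinvf a ha, hinvf b hb, hinvf c hc, hinvf d hd] at hfro
  -- clear denominators
  have hkey : (a + b) * (a + c) * (b + c) = 0 := by
    have hd' : d = a + b + c := by
      linear_combination hsum - (a + b + c) * htwo
    rw [hd'] at hfro
    have habc : a + b + c ≠ 0 := hd' ▸ hd0
    field_simp at hfro
    linear_combination hfro - a * b * c * htwo
  rcases mul_eq_zero.mp hkey with h | hbc
  · rcases mul_eq_zero.mp h with hab | hac
    · left
      have h1 : a = b := by linear_combination hab - b * htwo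
      refine ⟨h1, ?_⟩
      have : c + d = 0 := by linear_combination hsum - hab
      linear_combination this - d * htwo
    · right; left
      have h1 : a = c := by linear_combination hac - c * htwo
      refine ⟨h1, ?_⟩
      have : b + d = 0 := by linear_combination hsum - hac
      linear_combination this - d * htwo
  · right; right
    have h1 : b = c := by linear_combination hbc - c * htwo
    have : a + d = 0 := by linear_combination hsum - hbc
    exact ⟨by linear_combination this - d * htwo, h1⟩
end

section
/- Let $n \geq 1$ and let $F$ be the finite field of order $2^{2n}$. The set $G = \{x \in F : x^{2^n+1} = 1\}$ contains no affine plane over $\mathbb{F}_2$; i.e., there are no pairwise distinct $a, b, c, d \in G$ with $a + b + c + d = 0$. -/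
theorem stmt5 (n : ℕ) (hn : 1 ≤ n) (F : Type*) [Field F] [Fintype F]
    (hF : Fintype.card F = 2 ^ (2 * n)) :
    ¬ ∃ a b c d : F, a ∈ {x : F | x ^ (2 ^ n + 1) = 1} ∧
      b ∈ {x : F | x ^ (2 ^ n + 1) = 1} ∧ c ∈ {x : F | x ^ (2 ^ n + 1) = 1} ∧
      d ∈ {x : F | x ^ (2 ^ n + 1) = 1} ∧
      a ≠ b ∧ a ≠ c ∧ a ≠ d ∧ b ≠ c ∧ b ≠ d ∧ c ≠ d ∧ a + b + c + d = 0 := by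
  -- First establish characteristic 2
  obtain ⟨p, hp⟩ := CharP.exists F
  have hp2 : p = 2 := by
    obtain ⟨m, hprime, hcard⟩ := @FiniteField.card F _ _ p hp
    have hdvd : p ∣ 2 ^ (2 * n) := by
      rw [← hF, hcard]
      exact dvd_pow_self p m.pos.ne'
    have := hprime.dvd_of_dvd_pow hdvd
    exact (Nat.prime_dvd_prime_iff_eq hprime Nat.prime_two).mp this
  subst hp2
  haveI : CharP F 2 := hp
  have h2 : (2 : F) = 0 := CharP.cast_eq_zero F 2
  rintro ⟨a, b, c, d, ha, hb, hc, hd, hab, hac, had, hbc, hbd, hcd, hsum⟩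
  simp only [Set.mem_setOf_eq] at ha hb hc hd
  -- x^(2^n) * x = 1 for x in G
  have hqa : a ^ (2 ^ n) * a = 1 := by rw [← pow_succ]; exact ha
  have hqb : b ^ (2 ^ n) * b = 1 := by rw [← pow_succ]; exact hb
  have hqc : c ^ (2 ^ n) * c = 1 := by rw [← pow_succ]; exact hc
  have hqd : d ^ (2 ^ n) * d = 1 := by rw [← pow_succ]; exact hd
  have hs : a + b = c + d := by linear_combination hsum - (c + d) * h2
  have hsne : a + b ≠ 0 := by
    intro h
    exact hab (by linear_combination h - b * h2)
  -- Frobenius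
  have hfab : (a + b) ^ 2 ^ n = a ^ 2 ^ n + b ^ 2 ^ n := by haveI : Fact (Nat.Prime 2) := ⟨Nat.prime_two⟩; exact add_pow_char_pow _ _ 2 n
  have hfcd : (c + d) ^ 2 ^ n = c ^ 2 ^ n + d ^ 2 ^ n := by haveI : Fact (Nat.Prime 2) := ⟨Nat.prime_two⟩; exact add_pow_char_pow _ _ 2 n
  have key1 : (a + b) ^ 2 ^ n * (a * b) = a + b := by
    rw [hfab]; linear_combination b * hqa + a * hqb
  have key2 : (c + d) ^ 2 ^ n * (c * d) = c + d := by
    rw [hfcd]; linear_combination d * hqc + c * hqd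
  have hpowne : (a + b) ^ 2 ^ n ≠ 0 := pow_ne_zero _ hsne
  have habcd : a * b = c * d := by
    have : (a + b) ^ 2 ^ n * (a * b) = (a + b) ^ 2 ^ n * (c * d) := by
      rw [key1, hs, key2]
    exact mul_left_cancel₀ hpowne this
  have : (a + c) * (a + d) = 0 := by
    linear_combination (a ^ 2 + c * d) * h2 + habcd - a * hs
  rcases mul_eq_zero.mp this with h | h
  · exact hac (by linear_combination h - c * h2)
  · exact had (by linear_combination h - d * h2)
end

section
/- Let $n$ be an even positive integer and let $F$ be the finite field of order $2^{2n}$. Then the set $G \cup \{0\}$, where $G = \{x \in F : x^{2^n+1} = 1\}$, contains no four pairwise distinct elements summing to zero, and has cardinality $2^n + 2$. -/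
/-!
Let `q = 2 ^ n` and `G = {x | x ^ (q + 1) = 1}`. In characteristic 2 the map `x ↦ x ^ q` is
additive and inverts every element of `G`. If `a`, `b` and `a + b` lie in `G`, then
`1 = (a + b) ^ (q + 1) = (a + b) ^ 2 / (a b)`, so `a ^ 2 + a b + b ^ 2 = 0` and `a / b ∈ G` is a
cube root of unity different from `1`; this is impossible because `3 ∤ q + 1` for even `n`.
If `a, b, c, d ∈ G` sum to `0`, so do their inverses, and substituting `d = a + b + c` gives
`(a + b) (a + c) (b + c) = 0`. Finally `G` has `q + 1` elements since `q + 1 ∣ q ^ 2 - 1` and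
`Fˣ` is cyclic.
-/

lemma FiniteField.exists_isPrimitiveRoot {F : Type*} [Field F] [Fintype F] {k : ℕ}
    (hk : k ∣ Fintype.card F - 1) : ∃ ζ : F, IsPrimitiveRoot ζ k := by
  obtain ⟨g, hg⟩ := IsCyclic.exists_ofOrder_eq_natCard (α := Fˣ)
  rw [Nat.card_units, Nat.card_eq_fintype_card] at hg
  refine ⟨(g ^ (orderOf g / k) : Fˣ), IsPrimitiveRoot.coe_units_iff.mpr ?_⟩
  have hgk := orderOf_pow_orderOf_div (orderOf_pos g).ne' (hg ▸ hk)
  have hprim := IsPrimitiveRoot.orderOf (g ^ (orderOf g / k))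
  rwa [hgk] at hprim

lemma FiniteField.ncard_setOf_pow_eq_one {F : Type*} [Field F] [Fintype F] {k : ℕ}
    (hk : k ∣ Fintype.card F - 1) : {x : F | x ^ k = 1}.ncard = k := by
  obtain ⟨ζ, hζ⟩ := FiniteField.exists_isPrimitiveRoot hk
  have hk0 : 0 < k := Nat.pos_of_ne_zero fun h ↦ by
    simp only [h, zero_dvd_iff, Nat.sub_eq_zero_iff_le] at hk
    exact (Fintype.one_lt_card.trans_le hk).false
  have hroots : {x : F | x ^ k = 1} = Polynomial.nthRootsFinset k (1 : F) := by
    ext x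
    simp [Polynomial.mem_nthRootsFinset hk0]
  rw [hroots, Set.ncard_coe_finset, hζ.card_nthRootsFinset]

lemma pow_eq_inv_of_pow_succ_eq_one {M : Type*} [DivisionMonoid M] {a : M} {m : ℕ}
    (ha : a ^ (m + 1) = 1) : a ^ m = a⁻¹ :=
  eq_inv_of_mul_eq_one_left (by rwa [← pow_succ])

lemma Nat.coprime_three_two_pow_add_one {n : ℕ} (hn : Even n) : Nat.Coprime 3 (2 ^ n + 1) := by
  obtain ⟨k, rfl⟩ := hn
  have h4 : 2 ^ (k + k) % 3 = 1 := by
    rw [pow_add, ← mul_pow, Nat.pow_mod]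
    norm_num
  rw [Nat.Prime.coprime_iff_not_dvd Nat.prime_three]
  omega

lemma ne_zero_of_pow_succ_eq_one {M₀ : Type*} [MonoidWithZero M₀] [Nontrivial M₀] {a : M₀}
    {m : ℕ} (ha : a ^ (m + 1) = 1) : a ≠ 0 := by
  rintro rfl
  simp at ha

section CharTwo

variable {F : Type*} [Field F] [CharP F 2] {n : ℕ} {a b c d : F}

lemma add_add_ne_zero_of_pow_two_pow_add_one_eq_one (h3 : Nat.Coprime 3 (2 ^ n + 1))
    (ha : a ^ (2 ^ n + 1) = 1) (hb : b ^ (2 ^ n + 1) = 1) (hc : c ^ (2 ^ n + 1) = 1) :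
    a + b + c ≠ 0 := by
  intro hsum
  have h2 := CharTwo.two_eq_zero (R := F)
  have ha0 : a ≠ 0 := ne_zero_of_pow_succ_eq_one ha
  have hb0 : b ≠ 0 := ne_zero_of_pow_succ_eq_one hb
  have hc' : c = a + b := by linear_combination hsum - (a + b) * h2
  rw [hc', pow_succ, add_pow_char_pow, pow_eq_inv_of_pow_succ_eq_one ha,
    pow_eq_inv_of_pow_succ_eq_one hb] at hc
  have hω : (a / b) ^ 2 + a / b + 1 = 0 := by
    field_simp at hc ⊢
    linear_combination hc
  have hω3 : (a / b) ^ 3 = 1 := by linear_combination (a / b - 1) * hω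
  have hωq : (a / b) ^ (2 ^ n + 1) = 1 := by rw [div_pow, ha, hb, div_one]
  have hω1 : a / b = 1 := by
    simpa [h3] using pow_gcd_eq_one.mpr ⟨hω3, hωq⟩
  rw [hω1] at hω
  exact one_ne_zero (by linear_combination hω - h2)

lemma eq_or_eq_or_eq_of_add_add_add_eq_zero (ha : a ^ (2 ^ n + 1) = 1)
    (hb : b ^ (2 ^ n + 1) = 1) (hc : c ^ (2 ^ n + 1) = 1) (hd : d ^ (2 ^ n + 1) = 1)
    (hsum : a + b + c + d = 0) : a = b ∨ a = c ∨ b = c := by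
  have h2 := CharTwo.two_eq_zero (R := F)
  have ha0 : a ≠ 0 := ne_zero_of_pow_succ_eq_one ha
  have hb0 : b ≠ 0 := ne_zero_of_pow_succ_eq_one hb
  have hc0 : c ≠ 0 := ne_zero_of_pow_succ_eq_one hc
  have hd0 : d ≠ 0 := ne_zero_of_pow_succ_eq_one hd
  have hinv : a⁻¹ + b⁻¹ + c⁻¹ + d⁻¹ = 0 := by
    rw [← pow_eq_inv_of_pow_succ_eq_one ha, ← pow_eq_inv_of_pow_succ_eq_one hb,
      ← pow_eq_inv_of_pow_succ_eq_one hc, ← pow_eq_inv_of_pow_succ_eq_one hd,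
      ← add_pow_char_pow, ← add_pow_char_pow, ← add_pow_char_pow, hsum, zero_pow (by positivity)]
  obtain rfl : d = a + b + c := by linear_combination hsum - (a + b + c) * h2
  have hprod : (a + b) * (a + c) * (b + c) = 0 := by
    field_simp at hinv
    linear_combination hinv - a * b * c * h2
  simp only [mul_eq_zero] at hprod
  rcases hprod with (hab | hac) | hbc
  · exact Or.inl (by linear_combination hab - b * h2)
  · exact Or.inr (Or.inl (by linear_combination hac - c * h2))
  · exact Or.inr (Or.inr (by linear_combination hbc - c * h2))

end CharTwo

theorem stmt6_general (n : ℕ) (hne : Even n) (F : Type*) [Field F] [Fintype F]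
    (hF : Fintype.card F = 2 ^ (2 * n)) :
    (¬ ∃ a b c d : F,
      a ∈ insert (0 : F) {x : F | x ^ (2 ^ n + 1) = 1} ∧
      b ∈ insert (0 : F) {x : F | x ^ (2 ^ n + 1) = 1} ∧
      c ∈ insert (0 : F) {x : F | x ^ (2 ^ n + 1) = 1} ∧
      d ∈ insert (0 : F) {x : F | x ^ (2 ^ n + 1) = 1} ∧
      a ≠ b ∧ a ≠ c ∧ a ≠ d ∧ b ≠ c ∧ b ≠ d ∧ c ≠ d ∧ a + b + c + d = 0) ∧
    (insert (0 : F) {x : F | x ^ (2 ^ n + 1) = 1}).ncard = 2 ^ n + 2 := by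
  have : CharP F 2 := charP_of_card_eq_prime_pow hF
  refine ⟨?_, ?_⟩
  · rintro ⟨a, b, c, d, ha, hb, hc, hd, hab, hac, had, hbc, hbd, hcd, hsum⟩
    have h3 := Nat.coprime_three_two_pow_add_one hne
    simp only [Set.mem_insert_iff, Set.mem_ofPred_eq] at ha hb hc hd
    rcases ha with rfl | ha <;> rcases hb with rfl | hb <;> rcases hc with rfl | hc <;>
      rcases hd with rfl | hd
    all_goals first
      | contradiction
      | exact add_add_ne_zero_of_pow_two_pow_add_one_eq_one h3 hb hc hd
          (by linear_combination hsum)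
      | exact add_add_ne_zero_of_pow_two_pow_add_one_eq_one h3 ha hc hd
          (by linear_combination hsum)
      | exact add_add_ne_zero_of_pow_two_pow_add_one_eq_one h3 ha hb hd
          (by linear_combination hsum)
      | exact add_add_ne_zero_of_pow_two_pow_add_one_eq_one h3 ha hb hc
          (by linear_combination hsum)
      | rcases eq_or_eq_or_eq_of_add_add_add_eq_zero ha hb hc hd hsum with h | h | h <;>
          contradiction
  · have hdvd : 2 ^ n + 1 ∣ Fintype.card F - 1 :=
      ⟨2 ^ n - 1, by rw [hF, pow_mul', sq, ← one_mul 1, Nat.mul_self_sub_mul_self_eq, mul_one]⟩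
    rw [Set.ncard_insert_of_notMem (by simp), FiniteField.ncard_setOf_pow_eq_one hdvd]

theorem stmt6 (n : ℕ) (hn : 0 < n) (hne : Even n) (F : Type*) [Field F] [Fintype F]
    (hF : Fintype.card F = 2 ^ (2 * n)) :
    (¬ ∃ a b c d : F,
      a ∈ insert (0 : F) {x : F | x ^ (2 ^ n + 1) = 1} ∧
      b ∈ insert (0 : F) {x : F | x ^ (2 ^ n + 1) = 1} ∧
      c ∈ insert (0 : F) {x : F | x ^ (2 ^ n + 1) = 1} ∧
      d ∈ insert (0 : F) {x : F | x ^ (2 ^ n + 1) = 1} ∧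
      a ≠ b ∧ a ≠ c ∧ a ≠ d ∧ b ≠ c ∧ b ≠ d ∧ c ≠ d ∧ a + b + c + d = 0) ∧
    (insert (0 : F) {x : F | x ^ (2 ^ n + 1) = 1}).ncard = 2 ^ n + 2 :=
  stmt6_general n hne F hF
end

section
/- The set of solutions to $x^9 = 1$ in the finite field $\mathbb{F}_{64}$ is a cap set of size 9: it has exactly 9 elements and there are no pairwise distinct $a,b,c,d$ in it with $a+b+c+d = 0$. -/
/-!
In characteristic 2, if four ninth roots of unity satisfy `a + b + c + d = 0` then so do their
`2^k`-th powers, and reducing the exponents 16 and 32 modulo 9 shows that the power sums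
`p₅` and `p₇` vanish. With `d = a + b + c`, Newton's identities give `p₅ = e₂e₃` and
`p₇ = e₃(e₂² + e₄)`, where `e₃ = (a + b)(a + c)(b + c)` is nonzero as soon as `a, b, c` are
distinct. Hence `e₂ = e₄ = 0`, contradicting `e₄ = abcd ≠ 0`.
-/

theorem exists_isPrimitiveRoot_of_dvd_card_sub_one {F : Type*} [Field F] [Fintype F] {n : ℕ}
    (hn : n ∣ Fintype.card F - 1) : ∃ ζ : F, IsPrimitiveRoot ζ n := by
  classical
  obtain ⟨g, hg⟩ := IsCyclic.exists_generator (α := Fˣ)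
  have hg_prim : IsPrimitiveRoot (g : F) (Fintype.card F - 1) := by
    rw [IsPrimitiveRoot.coe_units_iff, ← Fintype.card_units, ← Nat.card_eq_fintype_card,
      ← orderOf_eq_card_of_forall_mem_zpowers hg]
    exact IsPrimitiveRoot.orderOf g
  obtain ⟨m, hm⟩ := hn
  have hm0 : m ≠ 0 := by
    rintro rfl
    have := Fintype.one_lt_card (α := F)
    omega
  refine ⟨(g : F) ^ m, ?_⟩
  simpa [hm, Nat.mul_div_cancel _ (Nat.pos_of_ne_zero hm0)] using
    hg_prim.pow_of_dvd hm0 (hm ▸ dvd_mul_left m n)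

theorem ncard_setOf_pow_eq_one_of_dvd_card_sub_one {F : Type*} [Field F] [Fintype F] {n : ℕ}
    (hn : n ∣ Fintype.card F - 1) : {x : F | x ^ n = 1}.ncard = n := by
  obtain ⟨ζ, hζ⟩ := exists_isPrimitiveRoot_of_dvd_card_sub_one hn
  have hn0 : 0 < n := Nat.pos_of_dvd_of_pos hn (by have := Fintype.one_lt_card (α := F); omega)
  have hset : {x : F | x ^ n = 1} = (Polynomial.nthRootsFinset n (1 : F) : Set F) := by
    ext x
    simp [Polynomial.mem_nthRootsFinset hn0]
  rw [hset, Set.ncard_coe_finset, hζ.card_nthRootsFinset]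

theorem charP_two_of_card_eq_two_pow {F : Type*} [Field F] [Fintype F] {k : ℕ}
    (hF : Fintype.card F = 2 ^ k) : CharP F 2 := by
  have h : (2 : F) ^ k = 0 := by exact_mod_cast hF ▸ Nat.cast_card_eq_zero F
  exact (CharP.charP_iff_prime_eq_zero Nat.prime_two).mpr (eq_zero_of_pow_eq_zero h)

namespace CharTwo

variable {R F : Type*} [CommRing R] [CharP R 2] [Field F] [CharP F 2]

theorem add_pow_two_pow_eq_zero {a b c d : R} (hsum : a + b + c + d = 0) (k : ℕ) :
    a ^ 2 ^ k + b ^ 2 ^ k + c ^ 2 ^ k + d ^ 2 ^ k = 0 := by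
  rw [← add_pow_char_pow, ← add_pow_char_pow, ← add_pow_char_pow, hsum, zero_pow (by positivity)]

-- The factors are the elementary symmetric functions `e₃`, `e₂`, `e₄` of `a, b, c, a + b + c`.
theorem pow_five_add_pow_five_add_pow_five_add_add_pow_five (a b c : R) :
    a ^ 5 + b ^ 5 + c ^ 5 + (a + b + c) ^ 5 =
      (a + b) * (a + c) * (b + c) * (a ^ 2 + b ^ 2 + c ^ 2 + a * b + a * c + b * c) := by
  grind

theorem pow_seven_add_pow_seven_add_pow_seven_add_add_pow_seven (a b c : R) :
    a ^ 7 + b ^ 7 + c ^ 7 + (a + b + c) ^ 7 =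
      (a + b) * (a + c) * (b + c) *
        ((a ^ 2 + b ^ 2 + c ^ 2 + a * b + a * c + b * c) ^ 2 + a * b * c * (a + b + c)) := by
  grind

theorem mul_eq_zero_of_sum_pow_five_eq_zero_of_sum_pow_seven_eq_zero {a b c d : F}
    (hab : a ≠ b) (hac : a ≠ c) (hbc : b ≠ c) (hsum : a + b + c + d = 0)
    (h5 : a ^ 5 + b ^ 5 + c ^ 5 + d ^ 5 = 0) (h7 : a ^ 7 + b ^ 7 + c ^ 7 + d ^ 7 = 0) :
    a * b * c * d = 0 := by
  obtain rfl : d = a + b + c := (CharTwo.add_eq_zero.mp hsum).symm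
  have he₃ : (a + b) * (a + c) * (b + c) ≠ 0 := by
    simp only [ne_eq, mul_eq_zero, CharTwo.add_eq_zero, not_or]
    exact ⟨⟨hab, hac⟩, hbc⟩
  rw [pow_five_add_pow_five_add_pow_five_add_add_pow_five, mul_eq_zero] at h5
  rw [pow_seven_add_pow_seven_add_pow_seven_add_add_pow_seven, mul_eq_zero] at h7
  have he₂ := h5.resolve_left he₃
  simpa [he₂] using h7.resolve_left he₃

theorem add_ne_zero_of_pow_nine_eq_one {a b c d : F} (ha : a ^ 9 = 1) (hb : b ^ 9 = 1)
    (hc : c ^ 9 = 1) (hd : d ^ 9 = 1) (hab : a ≠ b) (hac : a ≠ c) (hbc : b ≠ c) :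
    a + b + c + d ≠ 0 := by
  intro hsum
  have power_sum (k : ℕ) :
      a ^ (2 ^ k % 9) + b ^ (2 ^ k % 9) + c ^ (2 ^ k % 9) + d ^ (2 ^ k % 9) = 0 := by
    rw [← pow_eq_pow_mod _ ha, ← pow_eq_pow_mod _ hb, ← pow_eq_pow_mod _ hc,
      ← pow_eq_pow_mod _ hd]
    exact add_pow_two_pow_eq_zero hsum k
  have ne_zero {x : F} (hx : x ^ 9 = 1) : x ≠ 0 := ne_zero_pow (by norm_num) (hx ▸ one_ne_zero)
  exact mul_ne_zero (mul_ne_zero (mul_ne_zero (ne_zero ha) (ne_zero hb)) (ne_zero hc)) (ne_zero hd)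
    (mul_eq_zero_of_sum_pow_five_eq_zero_of_sum_pow_seven_eq_zero hab hac hbc hsum
      (power_sum 5) (power_sum 4))

end CharTwo

theorem stmt8 (F : Type*) [Field F] [Fintype F] (hF : Fintype.card F = 64) :
    ({x : F | x ^ 9 = 1}).ncard = 9 ∧
    ¬ ∃ a b c d : F, a ∈ {x : F | x ^ 9 = 1} ∧ b ∈ {x : F | x ^ 9 = 1} ∧
      c ∈ {x : F | x ^ 9 = 1} ∧ d ∈ {x : F | x ^ 9 = 1} ∧
      a ≠ b ∧ a ≠ c ∧ a ≠ d ∧ b ≠ c ∧ b ≠ d ∧ c ≠ d ∧ a + b + c + d = 0 := by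
  have : CharP F 2 := charP_two_of_card_eq_two_pow (k := 6) hF
  refine ⟨ncard_setOf_pow_eq_one_of_dvd_card_sub_one (by rw [hF]; norm_num), ?_⟩
  rintro ⟨a, b, c, d, ha, hb, hc, hd, hab, hac, -, hbc, -, -, hsum⟩
  exact CharTwo.add_ne_zero_of_pow_nine_eq_one ha hb hc hd hab hac hbc hsum
end

section
/- The cosets of the subgroup $G = \{x \in \mathbb{F}_{81}^\times : x^{20} = 1\}$ partition $\mathbb{F}_{81}^\times$ into 4 pairwise disjoint cap sets, each of size 20. -/
/-!
The cosets of the group `G` of 20th roots of unity in `F₈₁ˣ` partition `F₈₁ˣ` because `20 ∣ 80`,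
and scaling preserves cap sets, so it suffices to show that `G` is a cap set. After dividing by
one of the summands, `a + b + c = 0` in `G` becomes `1 + u = -v` with `u, v ∈ G`. In
characteristic 3, the norms `ε = u ^ 10` and `δ = (1 + u) ^ 10` to `F₉` are `±1`, and Frobenius
makes `u` a root of `X ^ 2 - (δ - 1 - ε) X + ε`; each of the four sign choices forces `u = 1`
or is contradictory.
-/

open Pointwise

def IsCapSet {R : Type*} [Add R] [Zero R] (S : Set R) : Prop :=
  ¬ ∃ a b c, a ∈ S ∧ b ∈ S ∧ c ∈ S ∧ a ≠ b ∧ a ≠ c ∧ b ≠ c ∧ a + b + c = 0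

theorem IsCapSet.image_mul_left {R : Type*} [NonUnitalNonAssocSemiring R] {S : Set R}
    (hS : IsCapSet S) {a : R} (ha : IsLeftRegular a) : IsCapSet ((a * ·) '' S) := by
  rintro ⟨_, _, _, ⟨x, hx, rfl⟩, ⟨y, hy, rfl⟩, ⟨z, hz, rfl⟩, hxy, hxz, hyz, hsum⟩
  refine hS ⟨x, y, z, hx, hy, hz, ne_of_apply_ne _ hxy, ne_of_apply_ne _ hxz,
    ne_of_apply_ne _ hyz, ha ?_⟩
  simpa only [mul_add, mul_zero] using hsum

theorem eq_one_of_pow_twenty_eq_one_of_one_add_pow_twenty_eq_one {R : Type*} [CommRing R]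
    [IsDomain R] [CharP R 3] {u : R} (hu : u ^ 20 = 1) (hu1 : (1 + u) ^ 20 = 1) : u = 1 := by
  have h3 : (3 : R) = 0 := by exact_mod_cast CharP.cast_eq_zero R 3
  have hneg : (-1 : R) ≠ 1 := fun h ↦ one_ne_zero (by linear_combination h3 + h : (1 : R) = 0)
  have frob : (1 + u) ^ 9 = 1 + u ^ 9 := by
    simpa using add_pow_char_pow (1 : R) u (p := 3) (n := 2)
  set ε := u ^ 10 with hε
  set δ := (1 + u) ^ 10 with hδ
  have hε2 : ε * ε = 1 := by rw [hε, ← pow_add, hu]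
  have hδ2 : δ * δ = 1 := by rw [hδ, ← pow_add, hu1]
  have hδε : δ = 1 + u + u ^ 9 + ε := by rw [hδ, pow_succ, frob]; ring
  -- `u` and `u ^ 9` are the roots of `X ^ 2 - (u + u ^ 9) X + u ^ 10`.
  have hquad : u ^ 2 = (δ - 1 - ε) * u - ε := by rw [hδε]; ring
  rcases mul_self_eq_one_iff.mp hε2 with hε1 | hε1
  · rcases mul_self_eq_one_iff.mp hδ2 with hδ1 | hδ1
    · have : (u - 1) ^ 2 = 0 := by
        rw [hε1, hδ1] at hquad
        linear_combination hquad - u * h3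
      exact sub_eq_zero.mp (pow_eq_zero_iff two_ne_zero |>.mp this)
    · have hu2 : u ^ 2 = -1 := by
        rw [hε1, hδ1] at hquad
        linear_combination hquad - u * h3
      have : ε = -1 := by rw [hε, show u ^ 10 = (u ^ 2) ^ 5 by ring, hu2]; norm_num
      exact absurd (this.symm.trans hε1) hneg
  · have hq : u ^ 2 = δ * u + 1 := by rw [hε1] at hquad; linear_combination hquad
    have hu4 : u ^ 4 = -1 := by
      linear_combination (u ^ 2 + δ * u + 2) * hq + u ^ 2 * hδ2 + (δ * u + 1) * h3
    have hu2 : u ^ 2 = -1 := by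
      rw [← hε1, hε, show u ^ 10 = (u ^ 4) ^ 2 * u ^ 2 by ring, hu4]
      ring
    have hδu : δ * u = 1 := by linear_combination hu2 - hq - h3
    have huδ : u = δ := by linear_combination δ * hδu - u * hδ2
    refine absurd ?_ hneg
    rw [← hu2, huδ, sq, hδ2]

theorem isCapSet_setOf_pow_twenty_eq_one {F : Type*} [Field F] [CharP F 3] :
    IsCapSet {x : F | x ^ 20 = 1} := by
  rintro ⟨a, b, c, ha, hb, hc, hab, -, -, habc⟩
  have ha0 : a ≠ 0 := by rintro rfl; simp at ha
  have hu : (b / a) ^ 20 = 1 := by rw [div_pow, ha, hb, div_one]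
  have hu1 : (1 + b / a) ^ 20 = 1 := by
    rw [show 1 + b / a = -c / a by field_simp; linear_combination habc, div_pow,
      Even.neg_pow (by decide), ha, hc, div_one]
  exact hab ((div_eq_one_iff_eq ha0).mp
    (eq_one_of_pow_twenty_eq_one_of_one_add_pow_twenty_eq_one hu hu1)).symm

theorem card_rootsOfUnity_of_dvd {R : Type*} [CommRing R] [IsDomain R] [Finite Rˣ] {d : ℕ}
    (hd : d ∣ Nat.card Rˣ) : Nat.card (rootsOfUnity d R) = d := by
  obtain ⟨g, hg⟩ := IsCyclic.exists_ofOrder_eq_natCard (α := Rˣ)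
  have : NeZero d := ⟨by rintro rfl; exact Nat.card_pos.ne' (zero_dvd_iff.mp hd)⟩
  rw [← hg] at hd
  have hζ : IsPrimitiveRoot (g ^ (orderOf g / d)) d := by
    simpa only [orderOf_pow_orderOf_div (orderOf_pos g).ne' hd] using
      IsPrimitiveRoot.orderOf (g ^ (orderOf g / d))
  exact hζ.card_rootsOfUnity'

theorem Units.val_image_smul_rootsOfUnity {M : Type*} [CommMonoid M] {k : ℕ} [NeZero k]
    (a : Mˣ) :
    Units.val '' (a • (rootsOfUnity k M : Set Mˣ)) = ((a : M) * ·) '' {x | x ^ k = 1} := by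
  rw [← Units.val_set_image_rootsOfUnity]
  exact Set.image_smul_distrib (Units.coeHom M) a _

theorem Subgroup.exists_leftCoset_partition {M : Type*} [Group M] (H : Subgroup M)
    [H.FiniteIndex] {n : ℕ} (hn : H.index = n) :
    ∃ a : Fin n → M, Pairwise (fun i j ↦ Disjoint (a i • (H : Set M)) (a j • (H : Set M))) ∧
      ⋃ i, a i • (H : Set M) = Set.univ := by
  let e : M ⧸ H ≃ Fin n := Finite.equivFinOfCardEq hn
  have hmem : ∀ i x, x ∈ (e.symm i).out • (H : Set M) ↔ e.symm i = x := by
    intro i x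
    rw [mem_leftCoset_iff, SetLike.mem_coe, ← QuotientGroup.eq, QuotientGroup.out_eq']
  refine ⟨fun i ↦ (e.symm i).out, fun i j hij ↦ Set.disjoint_left.mpr fun x hi hj ↦ hij ?_, ?_⟩
  · exact e.symm.injective (((hmem i x).mp hi).trans ((hmem j x).mp hj).symm)
  · exact Set.eq_univ_of_forall fun x ↦
      Set.mem_iUnion.mpr ⟨e x, (hmem _ x).mpr (e.symm_apply_apply _)⟩

theorem stmt10 (F : Type*) [Field F] [Fintype F] (hF : Fintype.card F = 81) :
    ∃ C : Fin 4 → Set F,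
      (∀ i, ∃ a : F, a ≠ 0 ∧ C i = (fun s => a * s) '' {x : F | x ^ 20 = 1}) ∧
      (∀ i j, i ≠ j → Disjoint (C i) (C j)) ∧
      (⋃ i, C i) = {x : F | x ≠ 0} ∧
      (∀ i, (C i).ncard = 20) ∧
      (∀ i, ¬ ∃ a b c, a ∈ C i ∧ b ∈ C i ∧ c ∈ C i ∧
        a ≠ b ∧ a ≠ c ∧ b ≠ c ∧ a + b + c = 0) := by
  have : CharP F 3 := charP_of_card_eq_prime_pow (f := 4) hF
  have hunits : Nat.card Fˣ = 80 := by rw [Nat.card_units, Nat.card_eq_fintype_card, hF]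
  set H := rootsOfUnity 20 F
  have hH : Nat.card H = 20 := card_rootsOfUnity_of_dvd (by rw [hunits]; norm_num)
  have hindex : H.index = 4 := by
    have := H.card_mul_index
    rw [hH, hunits] at this
    omega
  obtain ⟨a, hdisj, hcover⟩ := H.exists_leftCoset_partition hindex
  refine ⟨fun i ↦ Units.val '' (a i • (H : Set Fˣ)),
    fun i ↦ ⟨a i, (a i).ne_zero, Units.val_image_smul_rootsOfUnity (a i)⟩,
    fun i j hij ↦ (Set.disjoint_image_iff Units.val_injective).mpr (hdisj hij), ?_, fun i ↦ ?_,
    fun i ↦ ?_⟩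
  · rw [← Set.image_iUnion, hcover, Set.image_univ]
    ext x
    exact ⟨by rintro ⟨y, rfl⟩; exact y.ne_zero, fun hx ↦ ⟨Units.mk0 x hx, rfl⟩⟩
  · rw [Set.ncard_image_of_injective _ Units.val_injective, Set.ncard_smul_set,
      ← Nat.card_coe_set_eq]
    exact hH
  · change IsCapSet (Units.val '' _)
    rw [Units.val_image_smul_rootsOfUnity]
    exact isCapSet_setOf_pow_twenty_eq_one.image_mul_left (a i).isUnit.isRegular.left
end

section
/- The subgroup $G = \{x \in \mathbb{F}_{243}^\times : x^{22} = 1\}$ is a complete cap in $\mathbb{F}_{243}$: it is a cap set, and for every $y \in \mathbb{F}_{243} \setminus G$ there exist distinct $x_1, x_2 \in G$ with $y + x_1 + x_2 = 0$. -/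
set_option maxHeartbeats 4000000 in
theorem stmt12 (F : Type*) [Field F] [Fintype F] (hF : Fintype.card F = 243) :
    (¬ ∃ a b c : F, a ∈ {x : F | x ^ 22 = 1} ∧ b ∈ {x : F | x ^ 22 = 1} ∧
      c ∈ {x : F | x ^ 22 = 1} ∧ a ≠ b ∧ a ≠ c ∧ b ≠ c ∧ a + b + c = 0) ∧
    (∀ y : F, y ∉ {x : F | x ^ 22 = 1} →
      ∃ x₁ x₂ : F, x₁ ∈ {x : F | x ^ 22 = 1} ∧ x₂ ∈ {x : F | x ^ 22 = 1} ∧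
        x₁ ≠ x₂ ∧ y + x₁ + x₂ = 0) := by
  classical
  haveI : Fact (Nat.Prime 11) := ⟨by norm_num⟩
  have h22even : Even 22 := ⟨11, by norm_num⟩
  have hodd11 : Odd 11 := ⟨5, by norm_num⟩
  have h243 : ((243 : ℕ) : F) = 0 := by rw [← hF]; exact FiniteField.cast_card_eq_zero F
  have h3F : (3 : F) = 0 := by
    have h243' : (243 : F) = 0 := by exact_mod_cast h243
    have h35 : (3 : F) ^ 5 = 0 := by linear_combination h243'
    by_contra h3
    exact (pow_ne_zero 5 h3) h35
  have h1neN : (1 : F) ≠ -1 := by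
    intro h; exact one_ne_zero (show (1 : F) = 0 by linear_combination h3F - h)
  obtain ⟨g, hg⟩ := IsCyclic.exists_generator (α := Fˣ)
  have hgord : orderOf g = 242 := by
    have h := orderOf_eq_card_of_forall_mem_zpowers hg
    rw [h, Nat.card_units, Nat.card_eq_fintype_card, hF]
  have hod : orderOf (g ^ 22) = 11 := by
    rw [orderOf_pow, hgord]
    norm_num
  obtain ⟨a, haord⟩ : ∃ x : F, orderOf x = 11 :=
    ⟨((g ^ 22 : Fˣ) : F), by rw [orderOf_units]; exact hod⟩
  have ha11 : a ^ 11 = 1 := by rw [← haord]; exact pow_orderOf_eq_one a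
  have hane1 : a ≠ 1 := by intro h; rw [h, orderOf_one] at haord; norm_num at haord
  have hpow242 : ∀ x : F, x ≠ 0 → x ^ 242 = 1 := by
    intro x hx
    have h := FiniteField.pow_card_sub_one_eq_one x hx
    rw [hF] at h
    norm_num at h
    exact h
  have hpowne : ∀ (x : F) (k : ℕ), orderOf x = 11 → 0 < k → k < 11 → x ^ k ≠ 1 := by
    intro x k hord hk hk' h
    have hd := orderOf_dvd_of_pow_eq_one h
    rw [hord] at hd
    have := Nat.le_of_dvd hk hd
    omega
  have ha0 : a ≠ 0 := by
    intro h
    rw [h, zero_pow (by norm_num : (11 : ℕ) ≠ 0)] at ha11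
    exact zero_ne_one ha11
  have hinjgen : ∀ (x : F), x ≠ 0 → orderOf x = 11 → ∀ i < 11, ∀ j < 11, x ^ i = x ^ j → i = j := by
    intro x hx0 hord i hi j hj hij
    by_contra hne
    rcases Nat.lt_or_ge i j with hlt | hge
    · have h1 : x ^ j = x ^ i * x ^ (j - i) := by rw [← pow_add]; congr 1; omega
      rw [← hij] at h1
      have h2 : x ^ i * 1 = x ^ i * x ^ (j - i) := by rw [mul_one]; exact h1
      have h3 := (mul_left_cancel₀ (pow_ne_zero i hx0) h2).symm
      exact hpowne x (j - i) hord (by omega) (by omega) h3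
    · have hlt : j < i := by omega
      have h1 : x ^ i = x ^ j * x ^ (i - j) := by rw [← pow_add]; congr 1; omega
      rw [hij] at h1
      have h2 : x ^ j * 1 = x ^ j * x ^ (i - j) := by rw [mul_one]; exact h1
      have h3 := (mul_left_cancel₀ (pow_ne_zero j hx0) h2).symm
      exact hpowne x (i - j) hord (by omega) (by omega) h3
  have ha11p : ∀ e : ℕ, (a ^ e) ^ 11 = 1 := by
    intro e; rw [← pow_mul, mul_comm, pow_mul, ha11, one_pow]
  have ha22 : ∀ e : ℕ, (a ^ e) ^ 22 = 1 := by
    intro e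
    calc (a ^ e) ^ 22 = (a ^ e) ^ (11 * 2) := by norm_num
    _ = ((a ^ e) ^ 11) ^ 2 := pow_mul _ 11 2
    _ = 1 := by rw [ha11p e]; norm_num
  have hnen1 : ∀ e : ℕ, a ^ e ≠ -1 := by
    intro e h
    have h1 := ha11p e
    rw [h, Odd.neg_pow hodd11, one_pow] at h1
    exact h1neN h1.symm
  have hnegne1 : ∀ e : ℕ, -(a ^ e) ≠ 1 := fun e h => hnen1 e (by linear_combination -h)
  have hnegnen1 : ∀ e : ℕ, 0 < e → e < 11 → -(a ^ e) ≠ -1 :=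
    fun e he he' h => hpowne a e haord he he' (neg_inj.mp h)
  have h1a0 : (1 : F) + a ≠ 0 := fun h => hnen1 1 (by rw [pow_one]; linear_combination h)
  have h1s0 : (1 : F) - a ≠ 0 := fun h => hane1 (by linear_combination -h)
  have hPhi : (1 : F) + a + a^2 + a^3 + a^4 + a^5 + a^6 + a^7 + a^8 + a^9 + a^10 = 0 := by
    have h0 : (a - 1) * ((1 : F) + a + a^2 + a^3 + a^4 + a^5 + a^6 + a^7 + a^8 + a^9 + a^10) = 0 := by
      linear_combination ha11
    rcases mul_eq_zero.mp h0 with h | h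
    · exact absurd (by linear_combination h) hane1
    · exact h
  obtain ⟨σ, hσdef⟩ : ∃ s : F, s = (1 + a) ^ 22 := ⟨_, rfl⟩
  obtain ⟨δ, hδdef⟩ : ∃ s : F, s = (1 - a) ^ 22 := ⟨_, rfl⟩
  have h2211 : (22 * 11 : ℕ) = 242 := by norm_num
  have hσ11 : σ ^ 11 = 1 := by
    rw [hσdef, ← pow_mul, h2211]; exact hpow242 _ h1a0
  have hδ11 : δ ^ 11 = 1 := by
    rw [hδdef, ← pow_mul, h2211]; exact hpow242 _ h1s0
  have hP1 : σ = ((2) + (2)*a^2 + a^3 + a^4 + a^7 + a^8 + (2)*a^9 : F) := by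
    rw [hσdef]; linear_combination ((1) + (2)*a^1 + (2)*a^2 + a^7 + a^8 + a^10 + a^11 : F) * ha11 + ((8)*a^1 + (77)*a^2 + (513)*a^3 + (2438)*a^4 + (8778)*a^5 + (24871)*a^6 + (56848)*a^7 + (106590)*a^8 + (165806)*a^9 + (215549)*a^10 + (235144)*a^11 + (215548)*a^12 + (165806)*a^13 + (106590)*a^14 + (56848)*a^15 + (24871)*a^16 + (8778)*a^17 + (2438)*a^18 + (513)*a^19 + (77)*a^20 + (7)*a^21 : F) * h3F
  have hQ2 : δ = ((2) + a^1 + a^2 + (2)*a^3 + a^4 + a^7 + (2)*a^8 + a^9 + a^10 : F) := by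
    rw [hδdef]; linear_combination ((1) + (2)*a^1 + a^2 + a^7 + (2)*a^8 + (2)*a^10 + a^11 : F) * ha11 + ((-7)*a^1 + (77)*a^2 + (-514)*a^3 + (2438)*a^4 + (-8778)*a^5 + (24871)*a^6 + (-56848)*a^7 + (106590)*a^8 + (-165807)*a^9 + (215549)*a^10 + (-235144)*a^11 + (215548)*a^12 + (-165807)*a^13 + (106590)*a^14 + (-56848)*a^15 + (24871)*a^16 + (-8778)*a^17 + (2438)*a^18 + (-514)*a^19 + (77)*a^20 + (-8)*a^21 : F) * h3F
  have hσ3 : σ ^ 3 = ((2) + a^1 + a^2 + (2)*a^5 + (2)*a^6 + a^9 + a^10 : F) := by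
    have h9 : σ ^ 3 = (((2) + (2)*a^2 + a^3 + a^4 + a^7 + a^8 + (2)*a^9 : F)) ^ 3 := by rw [hP1]
    rw [h9]; linear_combination (a^1 + a^2 + (2)*a^5 + a^10 + a^13 + (2)*a^16 : F) * ha11 + ((2) + (8)*a^2 + (4)*a^3 + (12)*a^4 + (8)*a^5 + (12)*a^6 + (12)*a^7 + (12)*a^8 + (20)*a^9 + (15)*a^10 + (29)*a^11 + (20)*a^12 + (25)*a^13 + (17)*a^14 + (17)*a^15 + (17)*a^16 + (15)*a^17 + (21)*a^18 + (15)*a^19 + (17)*a^20 + (8)*a^21 + (5)*a^22 + (3)*a^23 + (4)*a^24 + (6)*a^25 + (4)*a^26 + (2)*a^27 : F) * h3F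
  have hσ9 : σ ^ 9 = ((2) + a^3 + (2)*a^4 + a^5 + a^6 + (2)*a^7 + a^8 : F) := by
    have h9 : σ ^ 9 = (σ ^ 3) ^ 3 := by ring
    rw [h9, hσ3]; linear_combination ((2)*a^4 + a^5 + (2)*a^7 + a^8 + a^16 + a^19 : F) * ha11 + ((2) + (4)*a^1 + (6)*a^2 + (4)*a^3 + (3)*a^4 + (9)*a^5 + (16)*a^6 + (18)*a^7 + (14)*a^8 + (10)*a^9 + (18)*a^10 + (29)*a^11 + (27)*a^12 + (15)*a^13 + (13)*a^14 + (22)*a^15 + (28)*a^16 + (20)*a^17 + (8)*a^18 + (9)*a^19 + (17)*a^20 + (15)*a^21 + (5)*a^22 + (2)*a^23 + (6)*a^24 + (6)*a^25 + (2)*a^26 + a^28 + a^29 : F) * h3F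
  have hσ5 : σ ^ 5 = ((2) + (2)*a^1 + a^2 + a^4 + a^7 + a^9 + (2)*a^10 : F) := by
    have h27 : σ ^ 5 = (σ ^ 9) ^ 3 := by
      have h : (σ ^ 9) ^ 3 = σ ^ 5 * (σ ^ 11) ^ 2 := by ring
      rw [h, hσ11, one_pow, mul_one]
    rw [h27, hσ9]; linear_combination ((2)*a^1 + a^2 + a^4 + a^7 + (2)*a^10 + a^13 : F) * ha11 + ((2) + (4)*a^3 + (8)*a^4 + (4)*a^5 + (6)*a^6 + (16)*a^7 + (16)*a^8 + (12)*a^9 + (20)*a^10 + (29)*a^11 + (25)*a^12 + (23)*a^13 + (29)*a^14 + (29)*a^15 + (23)*a^16 + (21)*a^17 + (21)*a^18 + (17)*a^19 + (11)*a^20 + (7)*a^21 + (5)*a^22 + (2)*a^23 : F) * h3F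
  have hσ4 : σ ^ 4 = ((2) + a^1 + (2)*a^3 + a^5 + a^6 + (2)*a^8 + a^10 : F) := by
    have h81 : σ ^ 4 = (σ ^ 5) ^ 3 := by
      have h : (σ ^ 5) ^ 3 = σ ^ 4 * σ ^ 11 := by ring
      rw [h, hσ11, mul_one]
    rw [h81, hσ5]; linear_combination (a^1 + a^5 + (2)*a^8 + a^10 + a^16 + (2)*a^19 : F) * ha11 + ((2) + (8)*a^1 + (12)*a^2 + (10)*a^3 + (10)*a^4 + (10)*a^5 + (8)*a^6 + (8)*a^7 + (11)*a^8 + (14)*a^9 + (21)*a^10 + (29)*a^11 + (24)*a^12 + (15)*a^13 + (16)*a^14 + (13)*a^15 + (9)*a^16 + (13)*a^17 + (15)*a^18 + (14)*a^19 + (19)*a^20 + (16)*a^21 + (5)*a^22 + (5)*a^23 + (6)*a^24 + a^25 + (4)*a^26 + (4)*a^27 + (2)*a^28 + (4)*a^29 + (2)*a^30 : F) * h3F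
  have hσne1 : σ ≠ 1 := by
    intro h
    have hh : ((2) + (2)*a^2 + a^3 + a^4 + a^7 + a^8 + (2)*a^9 : F) = (1 : F) := by rw [← hP1]; exact h
    exact one_ne_zero (show (1 : F) = 0 by
      linear_combination ((1) + a^2 + a^3 + (2)*a^4 + a^5 + a^6 + (2)*a^7 + a^8 + a^9 : F) * hh + (a^3 + a^5 + (2)*a^7 + a^8 : F) * hPhi + ((-1)*a^2 + (-1)*a^3 + (-2)*a^4 + (-2)*a^5 + (-3)*a^6 + (-4)*a^7 + (-4)*a^8 + (-5)*a^9 + (-4)*a^10 + (-5)*a^11 + (-4)*a^12 + (-4)*a^13 + (-3)*a^14 + (-3)*a^15 + (-3)*a^16 + (-2)*a^17 + (-1)*a^18 : F) * h3F)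
  have hδne1 : δ ≠ 1 := by
    intro h
    have hh : ((2) + a^1 + a^2 + (2)*a^3 + a^4 + a^7 + (2)*a^8 + a^9 + a^10 : F) = (1 : F) := by rw [← hQ2]; exact h
    exact one_ne_zero (show (1 : F) = 0 by
      linear_combination ((2) + a^4 + (2)*a^5 + (2)*a^6 + a^7 : F) * hh + ((2) + (2)*a^1 + a^3 + a^4 + a^6 + (2)*a^7 : F) * hPhi + ((-1) + (-2)*a^1 + (-2)*a^2 + (-3)*a^3 + (-3)*a^4 + (-3)*a^5 + (-4)*a^6 + (-6)*a^7 + (-7)*a^8 + (-6)*a^9 + (-5)*a^10 + (-3)*a^11 + (-3)*a^12 + (-4)*a^13 + (-4)*a^14 + (-3)*a^15 + (-2)*a^16 + (-1)*a^17 : F) * h3F)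
  have hσord : orderOf σ = 11 := orderOf_eq_prime hσ11 hσne1
  have hδord : orderOf δ = 11 := orderOf_eq_prime hδ11 hδne1
  have hσ0 : σ ≠ 0 := by
    intro h
    rw [h, zero_pow (by norm_num : (11 : ℕ) ≠ 0)] at hσ11
    exact zero_ne_one hσ11
  have hδ0 : δ ≠ 0 := by
    intro h
    rw [h, zero_pow (by norm_num : (11 : ℕ) ≠ 0)] at hδ11
    exact zero_ne_one hδ11
  have hσmod : ∀ n : ℕ, σ ^ n = σ ^ (n % 11) := by
    intro n
    conv_lhs => rw [← Nat.div_add_mod n 11]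
    rw [pow_add, pow_mul, hσ11, one_pow, one_mul]
  have hred : ∀ n m : ℕ, n % 11 = m % 11 → σ ^ n = σ ^ m := by
    intro n m h
    rw [hσmod n, hσmod m, h]
  have hne1 : δ ≠ σ := by
    intro h
    have hh : ((2) + a^1 + a^2 + (2)*a^3 + a^4 + a^7 + (2)*a^8 + a^9 + a^10 : F) = ((2) + (2)*a^2 + a^3 + a^4 + a^7 + a^8 + (2)*a^9 : F) := by rw [← hQ2, ← hP1]; exact h
    exact one_ne_zero (show (1 : F) = 0 by
      linear_combination ((1) + (2)*a^2 + (2)*a^3 + (2)*a^4 + (2)*a^7 + (2)*a^8 + (2)*a^9 : F) * hh + ((1) + a^1 + (2)*a^2 + (2)*a^3 + a^5 + (2)*a^6 + a^7 + (2)*a^8 + a^9 : F) * hPhi + ((-1)*a^1 + (-1)*a^2 + (-3)*a^3 + (-2)*a^4 + (-3)*a^5 + (-3)*a^6 + (-4)*a^7 + (-5)*a^8 + (-4)*a^9 + (-6)*a^10 + (-4)*a^11 + (-5)*a^12 + (-3)*a^13 + (-3)*a^14 + (-3)*a^15 + (-2)*a^16 + (-2)*a^17 + (-1)*a^18 + (-1)*a^19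 : F) * h3F)
  have hne3 : δ ≠ σ ^ 3 := by
    intro h
    have hh : ((2) + a^1 + a^2 + (2)*a^3 + a^4 + a^7 + (2)*a^8 + a^9 + a^10 : F) = ((2) + a^1 + a^2 + (2)*a^5 + (2)*a^6 + a^9 + a^10 : F) := by rw [← hQ2, ← hσ3]; exact h
    exact one_ne_zero (show (1 : F) = 0 by
      linear_combination ((2) + (2)*a^2 + a^3 + a^4 + a^5 + a^6 + a^7 + a^8 + (2)*a^9 : F) * hh + ((1) + (2)*a^1 + (2)*a^3 + (2)*a^4 + (2)*a^5 + (2)*a^7 : F) * hPhi + ((-1)*a^1 + (-1)*a^2 + (-3)*a^3 + (-3)*a^4 + (-3)*a^5 + (-3)*a^6 + (-4)*a^7 + (-4)*a^8 + (-4)*a^9 + (-5)*a^10 + (-4)*a^11 + (-4)*a^12 + (-3)*a^13 + (-1)*a^14 + (-1)*a^15 + (-2)*a^16 + (-2)*a^17 : F) * h3F)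
  have hne9 : δ ≠ σ ^ 9 := by
    intro h
    have hh : ((2) + a^1 + a^2 + (2)*a^3 + a^4 + a^7 + (2)*a^8 + a^9 + a^10 : F) = ((2) + a^3 + (2)*a^4 + a^5 + a^6 + (2)*a^7 + a^8 : F) := by rw [← hQ2, ← hσ9]; exact h
    exact one_ne_zero (show (1 : F) = 0 by
      linear_combination ((2) + (2)*a^2 + (2)*a^3 + (2)*a^4 + (2)*a^7 + (2)*a^8 + (2)*a^9 : F) * hh + ((1) + a^3 + (2)*a^4 + a^5 + a^6 + a^7 + a^8 + a^9 : F) * hPhi + ((-1)*a^1 + (-1)*a^2 + (-2)*a^3 + (-2)*a^4 + (-3)*a^5 + (-2)*a^6 + (-1)*a^7 + (-2)*a^8 + (-3)*a^9 + (-5)*a^10 + (-4)*a^11 + (-4)*a^12 + (-2)*a^13 + (-1)*a^14 + (-1)*a^15 + (-2)*a^16 + (-3)*a^17 + (-2)*a^18 + (-1)*a^19 : F) * h3F)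
  have hne5 : δ ≠ σ ^ 5 := by
    intro h
    have hh : ((2) + a^1 + a^2 + (2)*a^3 + a^4 + a^7 + (2)*a^8 + a^9 + a^10 : F) = ((2) + (2)*a^1 + a^2 + a^4 + a^7 + a^9 + (2)*a^10 : F) := by rw [← hQ2, ← hσ5]; exact h
    exact one_ne_zero (show (1 : F) = 0 by
      linear_combination ((2) + (2)*a^3 + (2)*a^8 : F) * hh + ((1) + a^1 + a^2 + (2)*a^3 + a^5 + (2)*a^6 + a^7 + (2)*a^8 : F) * hPhi + ((-1)*a^2 + (-3)*a^3 + (-1)*a^4 + (-2)*a^5 + (-4)*a^6 + (-3)*a^7 + (-5)*a^8 + (-3)*a^9 + (-3)*a^10 + (-6)*a^11 + (-3)*a^12 + (-2)*a^13 + (-2)*a^14 + (-2)*a^15 + (-3)*a^16 + (-1)*a^17 : F) * h3F)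
  have hne4 : δ ≠ σ ^ 4 := by
    intro h
    have hh : ((2) + a^1 + a^2 + (2)*a^3 + a^4 + a^7 + (2)*a^8 + a^9 + a^10 : F) = ((2) + a^1 + (2)*a^3 + a^5 + a^6 + (2)*a^8 + a^10 : F) := by rw [← hQ2, ← hσ4]; exact h
    exact one_ne_zero (show (1 : F) = 0 by
      linear_combination (a^2 + (2)*a^3 + (2)*a^4 + (2)*a^7 + (2)*a^8 + a^9 : F) * hh + ((1) + (2)*a^1 + (2)*a^4 + (2)*a^5 + (2)*a^6 + (2)*a^7 + (2)*a^8 : F) * hPhi + ((-1)*a^1 + (-1)*a^2 + (-1)*a^3 + (-2)*a^4 + (-3)*a^5 + (-4)*a^6 + (-4)*a^7 + (-4)*a^8 + (-4)*a^9 + (-5)*a^10 + (-6)*a^11 + (-4)*a^12 + (-3)*a^13 + (-3)*a^14 + (-3)*a^15 + (-3)*a^16 + (-2)*a^17 + (-1)*a^18 : F) * h3F)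
  have hS1 : (1 + a ^ 1) ^ 22 = σ ^ 1 := by rw [pow_one, pow_one, hσdef]
  have hS3 : (1 + a ^ 3) ^ 22 = σ ^ 3 := by
    have e : (1 : F) + a ^ 3 = (1 + a) ^ 3 := by linear_combination (-a - a^2) * h3F
    rw [e, pow_right_comm, hσdef]
  have hS9 : (1 + a ^ 9) ^ 22 = σ ^ 9 := by
    have e : (1 : F) + a ^ 9 = (1 + a ^ 3) ^ 3 := by linear_combination (-a^3 - a^6) * h3F
    rw [e, pow_right_comm, hS3]; ring
  have hS5 : (1 + a ^ 5) ^ 22 = σ ^ 5 := by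
    have e : (1 : F) + a ^ 5 = (1 + a ^ 9) ^ 3 := by
      linear_combination (-a^9 - a^18) * h3F + (-a^16 - a^5) * ha11
    rw [e, pow_right_comm, hS9]
    have h : (σ ^ 9) ^ 3 = σ ^ 5 * (σ ^ 11) ^ 2 := by ring
    rw [h, hσ11, one_pow, mul_one]
  have hS4 : (1 + a ^ 4) ^ 22 = σ ^ 4 := by
    have e : (1 : F) + a ^ 4 = (1 + a ^ 5) ^ 3 := by
      linear_combination (-a^5 - a^10) * h3F + (-a^4) * ha11
    rw [e, pow_right_comm, hS5]
    have h : (σ ^ 5) ^ 3 = σ ^ 4 * σ ^ 11 := by ring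
    rw [h, hσ11, mul_one]
  have hD1 : (1 - a ^ 1) ^ 22 = δ ^ 1 := by rw [pow_one, pow_one, hδdef]
  have hD3 : (1 - a ^ 3) ^ 22 = δ ^ 3 := by
    have e : (1 : F) - a ^ 3 = (1 - a) ^ 3 := by linear_combination (a - a^2) * h3F
    rw [e, pow_right_comm, hδdef]
  have hD9 : (1 - a ^ 9) ^ 22 = δ ^ 9 := by
    have e : (1 : F) - a ^ 9 = (1 - a ^ 3) ^ 3 := by linear_combination (a^3 - a^6) * h3F
    rw [e, pow_right_comm, hD3]; ring
  have hD5 : (1 - a ^ 5) ^ 22 = δ ^ 5 := by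
    have e : (1 : F) - a ^ 5 = (1 - a ^ 9) ^ 3 := by
      linear_combination (a^9 - a^18) * h3F + (a^16 + a^5) * ha11
    rw [e, pow_right_comm, hD9]
    have h : (δ ^ 9) ^ 3 = δ ^ 5 * (δ ^ 11) ^ 2 := by ring
    rw [h, hδ11, one_pow, mul_one]
  have hD4 : (1 - a ^ 4) ^ 22 = δ ^ 4 := by
    have e : (1 : F) - a ^ 4 = (1 - a ^ 5) ^ 3 := by
      linear_combination (a^5 - a^10) * h3F + (a^4) * ha11
    rw [e, pow_right_comm, hD5]
    have h : (δ ^ 5) ^ 3 = δ ^ 4 * δ ^ 11 := by ring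
    rw [h, hδ11, mul_one]
  have hflip : ∀ i j : ℕ, i + j = 11 → (1 + a ^ i) ^ 22 = (1 + a ^ j) ^ 22 := by
    intro i j hij
    have h' : a ^ i * a ^ j = 1 := by rw [← pow_add, hij, ha11]
    have e : (1 : F) + a ^ i = a ^ i * (1 + a ^ j) := by linear_combination -h'
    rw [e, mul_pow, ha22 i, one_mul]
  have hflipn : ∀ i j : ℕ, i + j = 11 → (1 - a ^ i) ^ 22 = (1 - a ^ j) ^ 22 := by
    intro i j hij
    have h' : a ^ i * a ^ j = 1 := by rw [← pow_add, hij, ha11]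
    have e : (1 : F) - a ^ i = -(a ^ i) * (1 - a ^ j) := by linear_combination -h'
    rw [e, mul_pow, Even.neg_pow h22even, ha22 i, one_mul]
  have hA1 : (1 + a ^ 1) ^ 22 ≠ 1 := by rw [hS1, pow_one]; exact hσne1
  have hA3 : (1 + a ^ 3) ^ 22 ≠ 1 := by rw [hS3]; exact hpowne σ 3 hσord (by norm_num) (by norm_num)
  have hA9 : (1 + a ^ 9) ^ 22 ≠ 1 := by rw [hS9]; exact hpowne σ 9 hσord (by norm_num) (by norm_num)
  have hA5 : (1 + a ^ 5) ^ 22 ≠ 1 := by rw [hS5]; exact hpowne σ 5 hσord (by norm_num) (by norm_num)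
  have hA4 : (1 + a ^ 4) ^ 22 ≠ 1 := by rw [hS4]; exact hpowne σ 4 hσord (by norm_num) (by norm_num)
  have hA2 : (1 + a ^ 2) ^ 22 ≠ 1 := by rw [hflip 2 9 (by norm_num)]; exact hA9
  have hA6 : (1 + a ^ 6) ^ 22 ≠ 1 := by rw [hflip 6 5 (by norm_num)]; exact hA5
  have hA7 : (1 + a ^ 7) ^ 22 ≠ 1 := by rw [hflip 7 4 (by norm_num)]; exact hA4
  have hA8 : (1 + a ^ 8) ^ 22 ≠ 1 := by rw [hflip 8 3 (by norm_num)]; exact hA3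
  have hA10 : (1 + a ^ 10) ^ 22 ≠ 1 := by rw [hflip 10 1 (by norm_num)]; exact hA1
  have hB1 : (1 - a ^ 1) ^ 22 ≠ 1 := by rw [hD1, pow_one]; exact hδne1
  have hB3 : (1 - a ^ 3) ^ 22 ≠ 1 := by rw [hD3]; exact hpowne δ 3 hδord (by norm_num) (by norm_num)
  have hB9 : (1 - a ^ 9) ^ 22 ≠ 1 := by rw [hD9]; exact hpowne δ 9 hδord (by norm_num) (by norm_num)
  have hB5 : (1 - a ^ 5) ^ 22 ≠ 1 := by rw [hD5]; exact hpowne δ 5 hδord (by norm_num) (by norm_num)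
  have hB4 : (1 - a ^ 4) ^ 22 ≠ 1 := by rw [hD4]; exact hpowne δ 4 hδord (by norm_num) (by norm_num)
  have hB2 : (1 - a ^ 2) ^ 22 ≠ 1 := by rw [hflipn 2 9 (by norm_num)]; exact hB9
  have hB6 : (1 - a ^ 6) ^ 22 ≠ 1 := by rw [hflipn 6 5 (by norm_num)]; exact hB5
  have hB7 : (1 - a ^ 7) ^ 22 ≠ 1 := by rw [hflipn 7 4 (by norm_num)]; exact hB4
  have hB8 : (1 - a ^ 8) ^ 22 ≠ 1 := by rw [hflipn 8 3 (by norm_num)]; exact hB3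
  have hB10 : (1 - a ^ 10) ^ 22 ≠ 1 := by rw [hflipn 10 1 (by norm_num)]; exact hB1
  have hroots : ∀ (n : ℕ), 0 < n → ∀ (s : Finset F), (∀ x ∈ s, x ^ n = 1) → n ≤ s.card →
      ∀ x : F, x ^ n = 1 → x ∈ s := by
    intro n hn s hs hcard x hx
    have hsub : s ⊆ (Polynomial.nthRoots n (1 : F)).toFinset := fun z hz =>
      Multiset.mem_toFinset.mpr ((Polynomial.mem_nthRoots hn).mpr (hs z hz))
    have hle : (Polynomial.nthRoots n (1 : F)).toFinset.card ≤ s.card :=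
      le_trans (le_trans (Multiset.toFinset_card_le _) (Polynomial.card_nthRoots n 1)) hcard
    have heq := Finset.eq_of_subset_of_card_le hsub hle
    rw [heq]
    exact Multiset.mem_toFinset.mpr ((Polynomial.mem_nthRoots hn).mpr hx)
  have hL2 : ∀ x : F, x ^ 11 = 1 → ∃ t, t < 11 ∧ x = σ ^ t := by
    intro x hx
    have hall : ∀ z ∈ (Finset.range 11).image (fun i => σ ^ i), z ^ 11 = 1 := by
      intro z hz
      obtain ⟨i, hi, rfl⟩ := Finset.mem_image.mp hz
      rw [← pow_mul, mul_comm, pow_mul, hσ11, one_pow]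
    have hinj : Set.InjOn (fun i => σ ^ i) ↑(Finset.range 11) := by
      intro i hi j hj hij
      simp only [Finset.coe_range, Set.mem_Iio] at hi hj
      exact hinjgen σ hσ0 hσord i hi j hj hij
    have hcard : 11 ≤ ((Finset.range 11).image (fun i => σ ^ i)).card := by
      rw [Finset.card_image_of_injOn hinj, Finset.card_range]
    have hmem := hroots 11 (by norm_num) _ hall hcard x hx
    obtain ⟨t, ht, hxt⟩ := Finset.mem_image.mp hmem
    exact ⟨t, Finset.mem_range.mp ht, hxt.symm⟩
  have hL1 : ∀ x : F, x ^ 22 = 1 → ∃ i, i < 11 ∧ (x = a ^ i ∨ x = -(a ^ i)) := by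
    intro x hx
    have hinj : Set.InjOn (fun i => a ^ i) ↑(Finset.range 11) := by
      intro i hi j hj hij
      simp only [Finset.coe_range, Set.mem_Iio] at hi hj
      exact hinjgen a ha0 haord i hi j hj hij
    have hinj2 : Set.InjOn (fun i => -(a ^ i)) ↑(Finset.range 11) := by
      intro i hi j hj hij
      exact hinj hi hj (neg_inj.mp hij)
    have hdisj : Disjoint ((Finset.range 11).image (fun i => a ^ i))
        ((Finset.range 11).image (fun i => -(a ^ i))) := by
      rw [Finset.disjoint_left]
      intro z hz1 hz2
      obtain ⟨i, hi, rfl⟩ := Finset.mem_image.mp hz1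
      obtain ⟨j, hj, hji⟩ := Finset.mem_image.mp hz2
      have h1 : (a ^ i) ^ 11 = 1 := ha11p i
      rw [← hji, Odd.neg_pow hodd11, ha11p j] at h1
      exact h1neN h1.symm
    have hall : ∀ z ∈ ((Finset.range 11).image (fun i => a ^ i)) ∪
        ((Finset.range 11).image (fun i => -(a ^ i))), z ^ 22 = 1 := by
      intro z hz
      rcases Finset.mem_union.mp hz with h | h
      · obtain ⟨i, hi, rfl⟩ := Finset.mem_image.mp h
        exact ha22 i
      · obtain ⟨i, hi, rfl⟩ := Finset.mem_image.mp h
        rw [Even.neg_pow h22even]; exact ha22 i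
    have hcard : 22 ≤ (((Finset.range 11).image (fun i => a ^ i)) ∪
        ((Finset.range 11).image (fun i => -(a ^ i)))).card := by
      rw [Finset.card_union_of_disjoint hdisj, Finset.card_image_of_injOn hinj,
        Finset.card_image_of_injOn hinj2, Finset.card_range]
    have hmem := hroots 22 (by norm_num) _ hall hcard x hx
    rcases Finset.mem_union.mp hmem with h | h
    · obtain ⟨i, hi, hxi⟩ := Finset.mem_image.mp h
      exact ⟨i, Finset.mem_range.mp hi, Or.inl hxi.symm⟩
    · obtain ⟨i, hi, hxi⟩ := Finset.mem_image.mp h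
      exact ⟨i, Finset.mem_range.mp hi, Or.inr hxi.symm⟩
  constructor
  · rintro ⟨p, q, r, hp, hq, hr, hpq, hpr, hqr, hsum⟩
    simp only [Set.mem_setOf_eq] at hp hq hr
    have hr0 : r ≠ 0 := by
      rintro rfl
      rw [zero_pow (by norm_num : (22 : ℕ) ≠ 0)] at hr
      exact zero_ne_one hr
    have hrr : r * r⁻¹ = 1 := mul_inv_cancel₀ hr0
    have hu22 : (p * r⁻¹) ^ 22 = 1 := by rw [mul_pow, inv_pow, hp, hr, inv_one, mul_one]
    have hv : (1 + p * r⁻¹) ^ 22 = 1 := by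
      have hvv : (1 : F) + p * r⁻¹ = -(q * r⁻¹) := by linear_combination r⁻¹ * hsum - hrr
      rw [hvv, Even.neg_pow h22even, mul_pow, inv_pow, hq, hr, inv_one, mul_one]
    have hune : p * r⁻¹ ≠ 1 := fun h => hpr ((mul_inv_eq_one₀ hr0).mp h)
    obtain ⟨i, hi, hrep⟩ := hL1 (p * r⁻¹) hu22
    rcases hrep with hrep | hrep
    · rw [hrep] at hune hv
      interval_cases i
      · exact hune (pow_zero a)
      · exact hA1 hv
      · exact hA2 hv
      · exact hA3 hv
      · exact hA4 hv
      · exact hA5 hv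
      · exact hA6 hv
      · exact hA7 hv
      · exact hA8 hv
      · exact hA9 hv
      · exact hA10 hv
    · rw [hrep] at hv
      have hv' : (1 - a ^ i) ^ 22 = 1 := by rw [sub_eq_add_neg]; exact hv
      interval_cases i
      · rw [pow_zero] at hv'; norm_num at hv'
      · exact hB1 hv'
      · exact hB2 hv'
      · exact hB3 hv'
      · exact hB4 hv'
      · exact hB5 hv'
      · exact hB6 hv'
      · exact hB7 hv'
      · exact hB8 hv'
      · exact hB9 hv'
      · exact hB10 hv'
  · intro y hy
    simp only [Set.mem_setOf_eq] at hy
    by_cases hy0 : y = 0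
    · subst hy0
      refine ⟨1, -1, ?_, ?_, ?_, by ring⟩
      · simp only [Set.mem_setOf_eq, one_pow]
      · simp only [Set.mem_setOf_eq]
        rw [Even.neg_pow h22even, one_pow]
      · exact fun h => h1neN h
    · have hz11 : (y ^ 22) ^ 11 = 1 := by
        rw [← pow_mul, h2211]
        exact hpow242 y hy0
      obtain ⟨t, ht, hzt⟩ := hL2 (y ^ 22) hz11
      have hcore : ∀ w : F, w ^ 22 = 1 → w ≠ 1 → w ≠ -1 → (1 + w) ^ 22 = y ^ 22 →
          ∃ x₁ x₂ : F, x₁ ∈ {x : F | x ^ 22 = 1} ∧ x₂ ∈ {x : F | x ^ 22 = 1} ∧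
            x₁ ≠ x₂ ∧ y + x₁ + x₂ = 0 := by
        intro w hw22 hw1 hwn1 hweq
        have h1w : (1 : F) + w ≠ 0 := fun h => hwn1 (by linear_combination h)
        have hg0 : y / (1 + w) ≠ 0 := div_ne_zero hy0 h1w
        have hgp : (y / (1 + w)) ^ 22 = 1 := by
          rw [div_pow, hweq, div_self (pow_ne_zero 22 hy0)]
        refine ⟨-(y / (1 + w)), -(y / (1 + w)) * w, ?_, ?_, ?_, ?_⟩
        · simp only [Set.mem_setOf_eq]
          rw [Even.neg_pow h22even]; exact hgp
        · simp only [Set.mem_setOf_eq]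
          rw [mul_pow, Even.neg_pow h22even, hgp, hw22, one_mul]
        · intro h
          apply hw1
          have h' : -(y / (1 + w)) * 1 = -(y / (1 + w)) * w := by rw [mul_one]; exact h
          exact (mul_left_cancel₀ (neg_ne_zero.mpr hg0) h').symm
        · field_simp
          ring
      interval_cases t
      · exact absurd (by simpa using hzt) hy
      · exact hcore (a ^ 1) (ha22 1) (hpowne a 1 haord (by norm_num) (by norm_num))
          (hnen1 1) (by rw [hS1, hzt])
      · obtain ⟨m, hm, hδm⟩ := hL2 δ hδ11
        interval_cases m
        · exact absurd (by simpa using hδm) hδne1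
        · exact absurd (by simpa using hδm) hne1
        · refine hcore (-(a ^ 1)) (by rw [Even.neg_pow h22even]; exact ha22 1)
            (hnegne1 1) (hnegnen1 1 (by norm_num) (by norm_num)) ?_
          have e1 : (1 : F) + -(a ^ 1) = 1 - a ^ 1 := by ring
          rw [e1, hD1, hδm, ← pow_mul, hzt]
        · exact absurd hδm hne3
        · exact absurd hδm hne4
        · exact absurd hδm hne5
        · refine hcore (-(a ^ 4)) (by rw [Even.neg_pow h22even]; exact ha22 4)
            (hnegne1 4) (hnegnen1 4 (by norm_num) (by norm_num)) ?_
          have e1 : (1 : F) + -(a ^ 4) = 1 - a ^ 4 := by ring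
          rw [e1, hD4, hδm, ← pow_mul, hzt]
          exact hred (6 * 4) 2 (by norm_num)
        · refine hcore (-(a ^ 5)) (by rw [Even.neg_pow h22even]; exact ha22 5)
            (hnegne1 5) (hnegnen1 5 (by norm_num) (by norm_num)) ?_
          have e1 : (1 : F) + -(a ^ 5) = 1 - a ^ 5 := by ring
          rw [e1, hD5, hδm, ← pow_mul, hzt]
          exact hred (7 * 5) 2 (by norm_num)
        · refine hcore (-(a ^ 3)) (by rw [Even.neg_pow h22even]; exact ha22 3)
            (hnegne1 3) (hnegnen1 3 (by norm_num) (by norm_num)) ?_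
          have e1 : (1 : F) + -(a ^ 3) = 1 - a ^ 3 := by ring
          rw [e1, hD3, hδm, ← pow_mul, hzt]
          exact hred (8 * 3) 2 (by norm_num)
        · exact absurd hδm hne9
        · refine hcore (-(a ^ 9)) (by rw [Even.neg_pow h22even]; exact ha22 9)
            (hnegne1 9) (hnegnen1 9 (by norm_num) (by norm_num)) ?_
          have e1 : (1 : F) + -(a ^ 9) = 1 - a ^ 9 := by ring
          rw [e1, hD9, hδm, ← pow_mul, hzt]
          exact hred (10 * 9) 2 (by norm_num)
      · exact hcore (a ^ 3) (ha22 3) (hpowne a 3 haord (by norm_num) (by norm_num))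
          (hnen1 3) (by rw [hS3, hzt])
      · exact hcore (a ^ 4) (ha22 4) (hpowne a 4 haord (by norm_num) (by norm_num))
          (hnen1 4) (by rw [hS4, hzt])
      · exact hcore (a ^ 5) (ha22 5) (hpowne a 5 haord (by norm_num) (by norm_num))
          (hnen1 5) (by rw [hS5, hzt])
      · obtain ⟨m, hm, hδm⟩ := hL2 δ hδ11
        interval_cases m
        · exact absurd (by simpa using hδm) hδne1
        · exact absurd (by simpa using hδm) hne1
        · refine hcore (-(a ^ 3)) (by rw [Even.neg_pow h22even]; exact ha22 3)
            (hnegne1 3) (hnegnen1 3 (by norm_num) (by norm_num)) ?_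
          have e1 : (1 : F) + -(a ^ 3) = 1 - a ^ 3 := by ring
          rw [e1, hD3, hδm, ← pow_mul, hzt]
        · exact absurd hδm hne3
        · exact absurd hδm hne4
        · exact absurd hδm hne5
        · refine hcore (-(a ^ 1)) (by rw [Even.neg_pow h22even]; exact ha22 1)
            (hnegne1 1) (hnegnen1 1 (by norm_num) (by norm_num)) ?_
          have e1 : (1 : F) + -(a ^ 1) = 1 - a ^ 1 := by ring
          rw [e1, hD1, hδm, ← pow_mul, hzt]
        · refine hcore (-(a ^ 4)) (by rw [Even.neg_pow h22even]; exact ha22 4)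
            (hnegne1 4) (hnegnen1 4 (by norm_num) (by norm_num)) ?_
          have e1 : (1 : F) + -(a ^ 4) = 1 - a ^ 4 := by ring
          rw [e1, hD4, hδm, ← pow_mul, hzt]
          exact hred (7 * 4) 6 (by norm_num)
        · refine hcore (-(a ^ 9)) (by rw [Even.neg_pow h22even]; exact ha22 9)
            (hnegne1 9) (hnegnen1 9 (by norm_num) (by norm_num)) ?_
          have e1 : (1 : F) + -(a ^ 9) = 1 - a ^ 9 := by ring
          rw [e1, hD9, hδm, ← pow_mul, hzt]
          exact hred (8 * 9) 6 (by norm_num)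
        · exact absurd hδm hne9
        · refine hcore (-(a ^ 5)) (by rw [Even.neg_pow h22even]; exact ha22 5)
            (hnegne1 5) (hnegnen1 5 (by norm_num) (by norm_num)) ?_
          have e1 : (1 : F) + -(a ^ 5) = 1 - a ^ 5 := by ring
          rw [e1, hD5, hδm, ← pow_mul, hzt]
          exact hred (10 * 5) 6 (by norm_num)
      · obtain ⟨m, hm, hδm⟩ := hL2 δ hδ11
        interval_cases m
        · exact absurd (by simpa using hδm) hδne1
        · exact absurd (by simpa using hδm) hne1
        · refine hcore (-(a ^ 9)) (by rw [Even.neg_pow h22even]; exact ha22 9)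
            (hnegne1 9) (hnegnen1 9 (by norm_num) (by norm_num)) ?_
          have e1 : (1 : F) + -(a ^ 9) = 1 - a ^ 9 := by ring
          rw [e1, hD9, hδm, ← pow_mul, hzt]
          exact hred (2 * 9) 7 (by norm_num)
        · exact absurd hδm hne3
        · exact absurd hδm hne4
        · exact absurd hδm hne5
        · refine hcore (-(a ^ 3)) (by rw [Even.neg_pow h22even]; exact ha22 3)
            (hnegne1 3) (hnegnen1 3 (by norm_num) (by norm_num)) ?_
          have e1 : (1 : F) + -(a ^ 3) = 1 - a ^ 3 := by ring
          rw [e1, hD3, hδm, ← pow_mul, hzt]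
          exact hred (6 * 3) 7 (by norm_num)
        · refine hcore (-(a ^ 1)) (by rw [Even.neg_pow h22even]; exact ha22 1)
            (hnegne1 1) (hnegnen1 1 (by norm_num) (by norm_num)) ?_
          have e1 : (1 : F) + -(a ^ 1) = 1 - a ^ 1 := by ring
          rw [e1, hD1, hδm, ← pow_mul, hzt]
        · refine hcore (-(a ^ 5)) (by rw [Even.neg_pow h22even]; exact ha22 5)
            (hnegne1 5) (hnegnen1 5 (by norm_num) (by norm_num)) ?_
          have e1 : (1 : F) + -(a ^ 5) = 1 - a ^ 5 := by ring
          rw [e1, hD5, hδm, ← pow_mul, hzt]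
          exact hred (8 * 5) 7 (by norm_num)
        · exact absurd hδm hne9
        · refine hcore (-(a ^ 4)) (by rw [Even.neg_pow h22even]; exact ha22 4)
            (hnegne1 4) (hnegnen1 4 (by norm_num) (by norm_num)) ?_
          have e1 : (1 : F) + -(a ^ 4) = 1 - a ^ 4 := by ring
          rw [e1, hD4, hδm, ← pow_mul, hzt]
          exact hred (10 * 4) 7 (by norm_num)
      · obtain ⟨m, hm, hδm⟩ := hL2 δ hδ11
        interval_cases m
        · exact absurd (by simpa using hδm) hδne1
        · exact absurd (by simpa using hδm) hne1
        · refine hcore (-(a ^ 4)) (by rw [Even.neg_pow h22even]; exact ha22 4)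
            (hnegne1 4) (hnegnen1 4 (by norm_num) (by norm_num)) ?_
          have e1 : (1 : F) + -(a ^ 4) = 1 - a ^ 4 := by ring
          rw [e1, hD4, hδm, ← pow_mul, hzt]
        · exact absurd hδm hne3
        · exact absurd hδm hne4
        · exact absurd hδm hne5
        · refine hcore (-(a ^ 5)) (by rw [Even.neg_pow h22even]; exact ha22 5)
            (hnegne1 5) (hnegnen1 5 (by norm_num) (by norm_num)) ?_
          have e1 : (1 : F) + -(a ^ 5) = 1 - a ^ 5 := by ring
          rw [e1, hD5, hδm, ← pow_mul, hzt]
          exact hred (6 * 5) 8 (by norm_num)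
        · refine hcore (-(a ^ 9)) (by rw [Even.neg_pow h22even]; exact ha22 9)
            (hnegne1 9) (hnegnen1 9 (by norm_num) (by norm_num)) ?_
          have e1 : (1 : F) + -(a ^ 9) = 1 - a ^ 9 := by ring
          rw [e1, hD9, hδm, ← pow_mul, hzt]
          exact hred (7 * 9) 8 (by norm_num)
        · refine hcore (-(a ^ 1)) (by rw [Even.neg_pow h22even]; exact ha22 1)
            (hnegne1 1) (hnegnen1 1 (by norm_num) (by norm_num)) ?_
          have e1 : (1 : F) + -(a ^ 1) = 1 - a ^ 1 := by ring
          rw [e1, hD1, hδm, ← pow_mul, hzt]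
        · exact absurd hδm hne9
        · refine hcore (-(a ^ 3)) (by rw [Even.neg_pow h22even]; exact ha22 3)
            (hnegne1 3) (hnegnen1 3 (by norm_num) (by norm_num)) ?_
          have e1 : (1 : F) + -(a ^ 3) = 1 - a ^ 3 := by ring
          rw [e1, hD3, hδm, ← pow_mul, hzt]
          exact hred (10 * 3) 8 (by norm_num)
      · exact hcore (a ^ 9) (ha22 9) (hpowne a 9 haord (by norm_num) (by norm_num))
          (hnen1 9) (by rw [hS9, hzt])
      · obtain ⟨m, hm, hδm⟩ := hL2 δ hδ11
        interval_cases m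
        · exact absurd (by simpa using hδm) hδne1
        · exact absurd (by simpa using hδm) hne1
        · refine hcore (-(a ^ 5)) (by rw [Even.neg_pow h22even]; exact ha22 5)
            (hnegne1 5) (hnegnen1 5 (by norm_num) (by norm_num)) ?_
          have e1 : (1 : F) + -(a ^ 5) = 1 - a ^ 5 := by ring
          rw [e1, hD5, hδm, ← pow_mul, hzt]
        · exact absurd hδm hne3
        · exact absurd hδm hne4
        · exact absurd hδm hne5
        · refine hcore (-(a ^ 9)) (by rw [Even.neg_pow h22even]; exact ha22 9)
            (hnegne1 9) (hnegnen1 9 (by norm_num) (by norm_num)) ?_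
          have e1 : (1 : F) + -(a ^ 9) = 1 - a ^ 9 := by ring
          rw [e1, hD9, hδm, ← pow_mul, hzt]
          exact hred (6 * 9) 10 (by norm_num)
        · refine hcore (-(a ^ 3)) (by rw [Even.neg_pow h22even]; exact ha22 3)
            (hnegne1 3) (hnegnen1 3 (by norm_num) (by norm_num)) ?_
          have e1 : (1 : F) + -(a ^ 3) = 1 - a ^ 3 := by ring
          rw [e1, hD3, hδm, ← pow_mul, hzt]
          exact hred (7 * 3) 10 (by norm_num)
        · refine hcore (-(a ^ 4)) (by rw [Even.neg_pow h22even]; exact ha22 4)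
            (hnegne1 4) (hnegnen1 4 (by norm_num) (by norm_num)) ?_
          have e1 : (1 : F) + -(a ^ 4) = 1 - a ^ 4 := by ring
          rw [e1, hD4, hδm, ← pow_mul, hzt]
          exact hred (8 * 4) 10 (by norm_num)
        · exact absurd hδm hne9
        · refine hcore (-(a ^ 1)) (by rw [Even.neg_pow h22even]; exact ha22 1)
            (hnegne1 1) (hnegnen1 1 (by norm_num) (by norm_num)) ?_
          have e1 : (1 : F) + -(a ^ 1) = 1 - a ^ 1 := by ring
          rw [e1, hD1, hδm, ← pow_mul, hzt]
end

section
/- In a field of characteristic 3, if $x \neq 0$, $x^{20} = 1$, and $(x+1)^{27} = (x+1)^7$, then $x = 1$ or $x = -1$. (Key step: the polynomial identity $(x+1)^7 - x^7 - 1 = x(x+1)(x-1)^4$ over $\mathbb{F}_3$.) -/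
theorem stmt17 (F : Type*) [Field F] [CharP F 3] :
    (∀ x : F, x ≠ 0 → x ^ 20 = 1 → (x + 1) ^ 27 = (x + 1) ^ 7 → x = 1 ∨ x = -1) ∧
    (∀ x : F, (x + 1) ^ 7 - x ^ 7 - 1 = x * (x + 1) * (x - 1) ^ 4) := by
  have h3 : (3 : F) = 0 := CharP.cast_eq_zero F 3
  have key : ∀ x : F, (x + 1) ^ 7 - x ^ 7 - 1 = x * (x + 1) * (x - 1) ^ 4 := by
    intro x
    linear_combination (2*x^6 + 8*x^5 + 11*x^4 + 11*x^3 + 8*x^2 + 2*x) * h3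
  refine ⟨?_, key⟩
  intro x hx h20 h27
  have hfrob : (x + 1) ^ 27 = x ^ 27 + 1 := by
    haveI : Fact (Nat.Prime 3) := ⟨by norm_num⟩
    have h := add_pow_char_pow (R := F) (p := 3) (n := 3) (x := x) (y := 1)
    norm_num at h
    simpa using h
  have hx27 : x ^ 27 = x ^ 7 := by
    calc x ^ 27 = x ^ 20 * x ^ 7 := by ring
    _ = x ^ 7 := by rw [h20, one_mul]
  have hzero : x * (x + 1) * (x - 1) ^ 4 = 0 := by
    rw [← key x]
    rw [hfrob, hx27] at h27
    linear_combination -h27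
  rcases mul_eq_zero.mp hzero with h | h
  · rcases mul_eq_zero.mp h with h | h
    · exact absurd h hx
    · right; linear_combination h
  · left
    have := pow_eq_zero_iff (n := 4) (by norm_num) |>.mp h
    linear_combination this
end
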